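/- arXiv:2009.03418 — 3 statements merged into one kernel-verified Lean document; each statement's English description precedes it below -/
import Mathlib

section
/- Let k ≥ 3, let P ⊆ S² be a set of k points in general position with P̂ = P ∪ (−P), and let P' ⊆ P with t = k − |P'|. Suppose for each p ∈ P' a half-circle H_p with endpoints p and −p is chosen so that the great circle of each H_p meets P̂ only in {p, −p}, and let s be the number of unordered pairs {p, p'} ⊆ P' of distinct points with H_p ∩ H_{p'} ≠ ∅. Then the total number of crossing pairs among the curves arc(a,b) (for all edges {a,b} of P̂) together with the half-circles H_p (p ∈ P') equals H(2k) − (1/2)·t·(k−1)(k−2) + s. -/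
open Set
open scoped RealInnerProductSpace

noncomputable section

/-- Three-dimensional Euclidean space. -/
abbrev E3 : Type := EuclideanSpace ℝ (Fin 3)

/-- The unit sphere `S²` in `ℝ³`. -/
def unitSphere : Set E3 := {x | ‖x‖ = 1}

/-- The geodesic arc from `p` to `q`: the radial projection onto the sphere of the
straight segment from `p` to `q`. -/
def arc (p q : E3) : Set E3 :=
  {x | ∃ t ∈ Icc (0 : ℝ) 1, x = ‖(1 - t) • p + t • q‖⁻¹ • ((1 - t) • p + t • q)}

/-- The half-circle with endpoints `p` and `-p` determined by a direction `v`. -/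
def halfCircle (p v : E3) : Set E3 :=
  {x | ∃ t ∈ Icc (0 : ℝ) Real.pi, x = Real.cos t • p + Real.sin t • v}

/-- A set of points is in general position if every three distinct points of it are
linearly independent. -/
def GenPos (P : Set E3) : Prop :=
  ∀ a ∈ P, ∀ b ∈ P, ∀ c ∈ P, a ≠ b → a ≠ c → b ≠ c → LinearIndependent ℝ ![a, b, c]

/-- `P̂ = P ∪ (-P)`: the set `P` together with the antipodes of its points. -/
def phat (P : Set E3) : Set E3 := P ∪ (fun x => -x) '' P

/-- The edges of a vertex set `V`: unordered pairs `{a, b}` of points of `V`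
with `b ∉ {a, -a}`. -/
def edges (V : Set E3) : Set (Sym2 E3) :=
  {e | ∃ a b, a ∈ V ∧ b ∈ V ∧ b ≠ a ∧ b ≠ -a ∧ e = s(a, b)}

/-- A curve of a drawing: a subset of the sphere together with its set of endpoints. -/
abbrev Curve : Type := Set E3 × Set E3

/-- The curves of the drawing determined by `P`: the geodesic arcs `arc a b` for all
edges `{a, b}` of `P̂`, together with the half-circles `halfCircle p (v p)` joining
`p` and `-p` for `p ∈ P'`. -/
def drawingCurves (P : Set E3) (v : E3 → E3) (P' : Set E3) : Set Curve :=
  {c | (∃ a b, a ∈ phat P ∧ b ∈ phat P ∧ b ≠ a ∧ b ≠ -a ∧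
          c = (arc a b, ({a, b} : Set E3))) ∨
       (∃ p ∈ P', c = (halfCircle p (v p), ({p, -p} : Set E3)))}

/-- The crossing pairs of a drawing: unordered pairs of distinct curves sharing a point
that is not an endpoint of either curve. -/
def crossingPairs (D : Set Curve) : Set (Sym2 Curve) :=
  {pr | ∃ c ∈ D, ∃ d ∈ D, c ≠ d ∧
    (∃ x, x ∈ c.1 ∧ x ∈ d.1 ∧ x ∉ c.2 ∧ x ∉ d.2) ∧ pr = s(c, d)}

/-- Hill's number `H(n)` as a rational number. -/
def Hfun (n : ℕ) : ℚ :=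
  (1 / 4 : ℚ) * ((n / 2 : ℕ) : ℚ) * (((n - 1) / 2 : ℕ) : ℚ) *
    (((n - 2) / 2 : ℕ) : ℚ) * (((n - 3) / 2 : ℕ) : ℚ)

/-!
Every point of `phat P` lies over a point of `P`, its representative up to sign. For four
distinct points `A, B, C, D` of `P`, general position makes the great circles through `A, B`
and through `C, D` distinct, so they meet in a pair `±x` avoiding `±A, ±B, ±C, ±D`. Of the
sixteen pairs formed by a lift of the arc `AB` and a lift of the arc `CD` to `phat P`, exactly
two cross, at `x` and at `-x`, while arcs whose endpoints share a point of `P` never cross.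
Counting ordered quadruples of endpoints, every crossing pair of arcs is counted eight times
and every ordered quadruple of distinct points of `P` has exactly two crossing lifts, which
gives `k (k-1) (k-2) (k-3) / 4` arc-arc crossings. In the same way the great circle of `H_p`
meets the great circle through two further points `B, C` of `P` in `±x`, exactly one of which
lies on `H_p`, so `H_p` crosses exactly one lift of each of the `(k-1)(k-2)/2` arcs `BC`.
Half-circles cross each other `s` times by definition, and `H(2k) = k (k-1)² (k-2) / 4` turns
the sum into the stated formula.
-/

open Module
open scoped Finset

section Counting

variable {α β γ : Type*} [DecidableEq β] [DecidableEq γ]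

lemma nodup_three_iff {a b c : α} : [a, b, c].Nodup ↔ a ≠ b ∧ a ≠ c ∧ b ≠ c := by
  simp [and_assoc]

lemma nodup_four_iff {a b c d : α} :
    [a, b, c, d].Nodup ↔ a ≠ b ∧ a ≠ c ∧ a ≠ d ∧ b ≠ c ∧ b ≠ d ∧ c ≠ d := by
  simp [and_assoc]

lemma card_image_eq_two_mul_card_image_comp (W : Finset α) (f : α → β) (g : β → γ)
    (σ : α → α) (hσW : ∀ a ∈ W, σ a ∈ W) (hσ : ∀ a ∈ W, f (σ a) ≠ f a)
    (hg : ∀ a ∈ W, g (f (σ a)) = g (f a))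
    (hfib : ∀ a ∈ W, ∀ b ∈ W, g (f b) = g (f a) → f b = f a ∨ f b = f (σ a)) :
    #(W.image f) = 2 * #(W.image (g ∘ f)) := by
  rw [← Finset.image_image, Finset.card_eq_sum_card_fiberwise (f := g)
    (t := (W.image f).image g) fun y hy => Finset.mem_image_of_mem g hy, mul_comm,
    ← smul_eq_mul, ← Finset.sum_const]
  refine Finset.sum_congr rfl fun c hc => ?_
  obtain ⟨-, ⟨a, ha, rfl⟩, rfl⟩ : ∃ y, (∃ a ∈ W, f a = y) ∧ g y = c := by
    simpa using hc
  have hfiber : {y ∈ W.image f | g y = g (f a)} = {f a, f (σ a)} := by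
    ext y
    simp only [Finset.mem_filter, Finset.mem_image, Finset.mem_insert, Finset.mem_singleton]
    constructor
    · rintro ⟨⟨b, hb, rfl⟩, hgb⟩
      exact hfib a ha b hb hgb
    · rintro (rfl | rfl)
      · exact ⟨⟨a, ha, rfl⟩, rfl⟩
      · exact ⟨⟨σ a, hσW a ha, rfl⟩, hg a ha⟩
  rw [hfiber, Finset.card_pair (hσ a ha).symm]

def distinctQuads [DecidableEq α] (s : Finset α) : Finset ((α × α) × (α × α)) :=
  {q ∈ (s ×ˢ s) ×ˢ (s ×ˢ s) | [q.1.1, q.1.2, q.2.1, q.2.2].Nodup}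

def distinctTriples [DecidableEq α] (s' s : Finset α) : Finset (α × (α × α)) :=
  {q ∈ s' ×ˢ (s ×ˢ s) | [q.1, q.2.1, q.2.2].Nodup}

lemma card_distinctQuads [DecidableEq α] (s : Finset α) :
    #(distinctQuads s) = #s * (#s - 1) * ((#s - 2) * (#s - 3)) := by
  rw [Finset.card_eq_sum_card_fiberwise (f := Prod.fst) (t := s.offDiag) fun q hq => by
    simp only [Finset.mem_coe, distinctQuads, Finset.mem_filter, Finset.mem_product,
      nodup_four_iff, Finset.mem_offDiag] at hq ⊢
    tauto]
  rw [Finset.sum_congr rfl (g := fun _ => (#s - 2) * (#s - 3)), Finset.sum_const, smul_eq_mul,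
    Finset.offDiag_card, Nat.mul_sub_one]
  rintro ⟨a, b⟩ hab
  obtain ⟨ha, hb, hab⟩ := Finset.mem_offDiag.1 hab
  have hfib : {q ∈ distinctQuads s | q.1 = (a, b)} =
      ((s.erase a).erase b).offDiag.image ((a, b), ·) := by
    ext ⟨⟨a', b'⟩, c, d⟩
    simp only [distinctQuads, Finset.mem_filter, Finset.mem_product, nodup_four_iff,
      Finset.mem_image, Finset.mem_offDiag, Finset.mem_erase, Prod.mk.injEq, Prod.exists]
    constructor
    · rintro ⟨⟨⟨-, hc, hd⟩, -, hac, had, hbc, hbd, hcd⟩, rfl, rfl⟩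
      exact ⟨c, d, ⟨⟨Ne.symm hbc, Ne.symm hac, hc⟩, ⟨Ne.symm hbd, Ne.symm had, hd⟩, hcd⟩,
        ⟨rfl, rfl⟩, rfl, rfl⟩
    · rintro ⟨c, d, ⟨⟨hbc, hac, hc⟩, ⟨hbd, had, hd⟩, hcd⟩, ⟨rfl, rfl⟩, rfl, rfl⟩
      exact ⟨⟨⟨⟨ha, hb⟩, hc, hd⟩, hab, Ne.symm hac, Ne.symm had, Ne.symm hbc, Ne.symm hbd, hcd⟩,
        rfl, rfl⟩
  rw [hfib, Finset.card_image_of_injective _ (Prod.mk_right_injective _), Finset.offDiag_card,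
    Finset.card_erase_of_mem (Finset.mem_erase.2 ⟨Ne.symm hab, hb⟩),
    Finset.card_erase_of_mem ha, ← Nat.mul_sub_one, Nat.sub_sub, Nat.sub_sub]

lemma card_distinctTriples [DecidableEq α] {s' s : Finset α} (hs : s' ⊆ s) :
    #(distinctTriples s' s) = #s' * ((#s - 1) * (#s - 2)) := by
  rw [Finset.card_eq_sum_card_fiberwise (f := Prod.fst) (t := s') fun q hq => by
    simp only [Finset.mem_coe, distinctTriples, Finset.mem_filter, Finset.mem_product] at hq ⊢
    exact hq.1.1]
  rw [Finset.sum_congr rfl (g := fun _ => (#s - 1) * (#s - 2)), Finset.sum_const, smul_eq_mul]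
  intro p hp
  have hfib : {q ∈ distinctTriples s' s | q.1 = p} = (s.erase p).offDiag.image (p, ·) := by
    ext ⟨p', b, c⟩
    simp only [distinctTriples, Finset.mem_filter, Finset.mem_product, nodup_three_iff,
      Finset.mem_image, Finset.mem_offDiag, Finset.mem_erase, Prod.mk.injEq, Prod.exists]
    constructor
    · rintro ⟨⟨⟨-, hb, hc⟩, hpb, hpc, hbc⟩, rfl⟩
      exact ⟨b, c, ⟨⟨Ne.symm hpb, hb⟩, ⟨Ne.symm hpc, hc⟩, hbc⟩, rfl, rfl, rfl⟩
    · rintro ⟨b, c, ⟨⟨hpb, hb⟩, ⟨hpc, hc⟩, hbc⟩, rfl, rfl, rfl⟩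
      exact ⟨⟨⟨hp, hb, hc⟩, Ne.symm hpb, Ne.symm hpc, hbc⟩, rfl⟩
  rw [hfib, Finset.card_image_of_injective _ (Prod.mk_right_injective _), Finset.offDiag_card,
    Finset.card_erase_of_mem (hs hp), ← Nat.mul_sub_one, Nat.sub_sub]

end Counting

section UnitVectors

variable {V : Type*} [NormedAddCommGroup V] [NormedSpace ℝ V]

lemma eq_or_eq_neg_of_eq_smul {x a : V} {c : ℝ} (hx : ‖x‖ = 1) (ha : ‖a‖ = 1)
    (h : x = c • a) : x = a ∨ x = -a := by
  have hc : |c| = 1 := by simpa [h, norm_smul, ha] using hx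
  rcases abs_eq zero_le_one |>.1 hc with rfl | rfl <;> simp [h]

lemma eq_of_eq_smul_of_nonneg {x a : V} {c : ℝ} (hx : ‖x‖ = 1) (ha : ‖a‖ = 1) (hc : 0 ≤ c)
    (h : x = c • a) : x = a := by
  have hc : c = 1 := by simpa [h, norm_smul, ha, abs_of_nonneg hc] using hx
  simp [h, hc]

lemma linearIndependent_pair_of_norm_eq_one {a b : V} (ha : ‖a‖ = 1) (hb : ‖b‖ = 1)
    (h₁ : b ≠ a) (h₂ : b ≠ -a) : LinearIndependent ℝ ![a, b] := by
  refine linearIndependent_fin2.2 ⟨by simpa using ne_zero_of_norm_ne_zero (hb.trans_ne one_ne_zero),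
    fun c hc => ?_⟩
  rcases eq_or_eq_neg_of_eq_smul ha hb (by simpa using hc.symm) with h | h
  · exact h₁ h.symm
  · exact h₂ (by rw [h, neg_neg])

lemma exists_norm_eq_one_mem {K : Submodule ℝ V} (hK : finrank ℝ K = 1) : ∃ x ∈ K, ‖x‖ = 1 := by
  obtain ⟨⟨y, hyK⟩, hy0, -⟩ := finrank_eq_one_iff'.1 hK
  have hy : y ≠ 0 := fun h => hy0 (Subtype.ext h)
  exact ⟨‖y‖⁻¹ • y, K.smul_mem _ hyK, by simp [norm_smul, hy]⟩

lemma eq_or_eq_neg_of_finrank_eq_one {K : Submodule ℝ V} (hK : finrank ℝ K = 1) {x y : V}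
    (hxK : x ∈ K) (hyK : y ∈ K) (hx : ‖x‖ = 1) (hy : ‖y‖ = 1) : y = x ∨ y = -x := by
  have hx0 : (⟨x, hxK⟩ : K) ≠ 0 := fun h => by
    rw [Submodule.mk_eq_zero] at h
    simp [h] at hx
  obtain ⟨c, hc⟩ := (finrank_eq_one_iff_of_nonzero' _ hx0).1 hK ⟨y, hyK⟩
  exact eq_or_eq_neg_of_eq_smul hy hx (congrArg Subtype.val hc).symm

end UnitVectors

section Planes

variable {K V : Type*} [Field K] [AddCommGroup V] [Module K V]

lemma finrank_span_pair {a b : V} (h : LinearIndependent K ![a, b]) :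
    finrank K (Submodule.span K {a, b}) = 2 := by
  rw [← Matrix.range_cons_cons_empty a b ![]]
  simpa using finrank_span_eq_card h

lemma notMem_span_pair_of_linearIndependent {x y z : V} (h : LinearIndependent K ![x, y, z]) :
    x ∉ Submodule.span K {y, z} := by
  simpa [Fin.tail, Matrix.range_cons_cons_empty, Set.pair_comm] using
    (linearIndependent_finSucc.1 h).2

lemma span_pair_eq_of_eq_or_eq_neg {a b a' b' : V} (ha : a' = a ∨ a' = -a)
    (hb : b' = b ∨ b' = -b) : Submodule.span K {a', b'} = Submodule.span K {a, b} := by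
  rcases ha with rfl | rfl <;> rcases hb with rfl | rfl <;>
    simp only [Submodule.span_insert, ← Set.neg_singleton, Submodule.span_neg]

lemma linearIndependent_pair_of_eq_or_eq_neg {a b a' b' : V}
    (hab : LinearIndependent K ![a, b]) (ha : a' = a ∨ a' = -a) (hb : b' = b ∨ b' = -b) :
    LinearIndependent K ![a', b'] := by
  rcases ha with rfl | rfl <;> rcases hb with rfl | rfl <;> simpa using hab

lemma finrank_inf_eq_one [FiniteDimensional K V] (hV : finrank K V = 3) {U W : Submodule K V}
    (hU : finrank K U = 2) (hW : finrank K W = 2) (hUW : U ≠ W) : finrank K ↥(U ⊓ W) = 1 := by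
  have hsum := Submodule.finrank_sup_add_finrank_inf_eq U W
  have hsup := hV ▸ Submodule.finrank_le (U ⊔ W)
  have hle := Submodule.finrank_mono (inf_le_left : U ⊓ W ≤ U)
  have hne : finrank K ↥(U ⊓ W) ≠ 2 := fun h2 => by
    have hUW' : U ⊓ W = U := Submodule.eq_of_le_of_finrank_le inf_le_left (by omega)
    exact hUW (Submodule.eq_of_le_of_finrank_le (hUW' ▸ inf_le_right) (by omega))
  omega

end Planes

lemma finrank_span_pair_inf_span_pair {a b c d : E3} (hab : LinearIndependent ℝ ![a, b])
    (hcd : LinearIndependent ℝ ![c, d]) (hd : d ∉ Submodule.span ℝ {a, b}) :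
    finrank ℝ ↥(Submodule.span ℝ {a, b} ⊓ Submodule.span ℝ {c, d}) = 1 :=
  finrank_inf_eq_one finrank_euclideanSpace_fin (finrank_span_pair hab) (finrank_span_pair hcd)
    fun h => hd (h ▸ Submodule.subset_span (by simp))

section Arcs

lemma arc_comm (a b : E3) : arc a b = arc b a := by
  have key : ∀ a b : E3, arc a b ⊆ arc b a := by
    rintro a b x ⟨t, ⟨ht0, ht1⟩, rfl⟩
    exact ⟨1 - t, ⟨by linarith, by linarith⟩, by rw [sub_sub_cancel, add_comm]⟩
  exact (key a b).antisymm (key b a)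

lemma neg_mem_arc_neg {a b x : E3} (hx : x ∈ arc a b) : -x ∈ arc (-a) (-b) := by
  obtain ⟨t, ht, rfl⟩ := hx
  exact ⟨t, ht, by simp only [smul_neg, ← neg_add, norm_neg]⟩

lemma arc_subset_span (a b : E3) : arc a b ⊆ Submodule.span ℝ {a, b} := by
  rintro x ⟨t, -, rfl⟩
  exact Submodule.smul_mem _ _ (Submodule.mem_span_pair.2 ⟨1 - t, t, rfl⟩)

lemma mem_arc_of_eq_add {a b x : E3} (hx : ‖x‖ = 1) {α β : ℝ} (hα : 0 ≤ α) (hβ : 0 ≤ β)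
    (h : x = α • a + β • b) : x ∈ arc a b := by
  have hs : 0 < α + β := by
    by_contra! hs
    obtain ⟨rfl, rfl⟩ : α = 0 ∧ β = 0 := ⟨by linarith, by linarith⟩
    simp [h] at hx
  refine ⟨β / (α + β), ⟨by positivity, (div_le_one hs).2 (by linarith)⟩, ?_⟩
  have hseg : (1 - β / (α + β)) • a + (β / (α + β)) • b = (α + β)⁻¹ • x := by
    rw [h, smul_add, smul_smul, smul_smul]
    congr 2 <;> field_simp
    ring
  rw [hseg, norm_smul, hx, norm_inv, Real.norm_of_nonneg hs.le, mul_one, inv_inv, smul_smul,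
    mul_inv_cancel₀ hs.ne', one_smul]

lemma mem_arc_iff {a b x : E3} (hab : LinearIndependent ℝ ![a, b]) :
    x ∈ arc a b ↔ ‖x‖ = 1 ∧ ∃ α β : ℝ, 0 ≤ α ∧ 0 ≤ β ∧ x = α • a + β • b := by
  refine ⟨?_, fun ⟨hx, α, β, hα, hβ, h⟩ => mem_arc_of_eq_add hx hα hβ h⟩
  rintro ⟨t, ⟨ht0, ht1⟩, rfl⟩
  have hN : ‖(1 - t) • a + t • b‖ ≠ 0 := fun h0 => by
    obtain ⟨h1, rfl⟩ := hab.eq_zero_of_pair (norm_eq_zero.1 h0)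
    norm_num at h1
  refine ⟨by rw [norm_smul, norm_inv, norm_norm, inv_mul_cancel₀ hN], _, _,
    mul_nonneg (inv_nonneg.2 (norm_nonneg _)) (sub_nonneg.2 ht1),
    mul_nonneg (inv_nonneg.2 (norm_nonneg _)) ht0, by rw [smul_add, smul_smul, smul_smul]⟩

lemma exists_signs_mem_arc {A B x : E3} (hx : ‖x‖ = 1)
    (hxs : x ∈ Submodule.span ℝ {A, B}) :
    ∃ a b, (a = A ∨ a = -A) ∧ (b = B ∨ b = -B) ∧ x ∈ arc a b := by
  have sign : ∀ (α : ℝ) (A : E3), ∃ a, (a = A ∨ a = -A) ∧ α • A = |α| • a := fun α A => by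
    rcases le_total 0 α with h | h
    · exact ⟨A, Or.inl rfl, by rw [abs_of_nonneg h]⟩
    · exact ⟨-A, Or.inr rfl, by rw [abs_of_nonpos h, neg_smul_neg]⟩
  obtain ⟨α, β, rfl⟩ := Submodule.mem_span_pair.1 hxs
  obtain ⟨a, ha, hαa⟩ := sign α A
  obtain ⟨b, hb, hβb⟩ := sign β B
  exact ⟨a, b, ha, hb, mem_arc_of_eq_add hx (abs_nonneg α) (abs_nonneg β) (by rw [hαa, hβb])⟩

lemma neg_notMem_arc {a b : E3} (hab : LinearIndependent ℝ ![a, b]) : -a ∉ arc a b := by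
  intro h
  obtain ⟨-, α, β, hα, -, hab'⟩ := (mem_arc_iff hab).1 h
  have := (hab.eq_of_pair (s := -1) (t := 0) (by simpa using hab')).1
  linarith

lemma signs_eq_of_mem_arc {a b a' b' x : E3} (hab : LinearIndependent ℝ ![a, b])
    (ha : ‖a‖ = 1) (hb : ‖b‖ = 1) (ha' : a' = a ∨ a' = -a) (hb' : b' = b ∨ b' = -b)
    (hx : x ∈ arc a b) (hx' : x ∈ arc a' b') (hxa : x ≠ a) (hxb : x ≠ b) :
    a' = a ∧ b' = b := by
  obtain ⟨hx1, α, β, hα, hβ, hxab⟩ := (mem_arc_iff hab).1 hx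
  have hα : 0 < α := hα.lt_of_ne fun h => hxb <|
    eq_of_eq_smul_of_nonneg hx1 hb hβ (by simpa [← h] using hxab)
  have hβ : 0 < β := hβ.lt_of_ne fun h => hxa <|
    eq_of_eq_smul_of_nonneg hx1 ha hα.le (by simpa [← h] using hxab)
  obtain ⟨-, α', β', hα', hβ', hxab'⟩ :=
    (mem_arc_iff (linearIndependent_pair_of_eq_or_eq_neg hab ha' hb')).1 hx'
  rcases ha' with ha' | ha' <;> rcases hb' with hb' | hb'
  · exact ⟨ha', hb'⟩
  all_goals
    rw [ha', hb'] at hxab'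
    simp only [smul_neg, ← neg_smul] at hxab'
    have := hab.eq_of_pair (hxab.symm.trans hxab')
    exfalso
    linarith [this.1, this.2]

end Arcs

section HalfCircles

variable {p w x : E3}

lemma halfCircle_subset_span (p w : E3) : halfCircle p w ⊆ Submodule.span ℝ {p, w} := by
  rintro x ⟨t, -, rfl⟩
  exact Submodule.mem_span_pair.2 ⟨_, _, rfl⟩

lemma norm_add_smul_sq_of_inner_eq_zero (hp : ‖p‖ = 1) (hw : ‖w‖ = 1) (hpw : ⟪p, w⟫ = 0)
    (α β : ℝ) : ‖α • p + β • w‖ ^ 2 = α ^ 2 + β ^ 2 := by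
  rw [norm_add_sq_real, norm_smul, norm_smul, real_inner_smul_left, real_inner_smul_right, hpw,
    hp, hw, Real.norm_eq_abs, Real.norm_eq_abs]
  ring_nf
  simp

lemma linearIndependent_of_inner_eq_zero (hp : ‖p‖ = 1) (hw : ‖w‖ = 1) (hpw : ⟪p, w⟫ = 0) :
    LinearIndependent ℝ ![p, w] := by
  refine linearIndependent_pair_of_norm_eq_one hp hw ?_ ?_ <;> rintro rfl
  all_goals simp at hpw; simp [hpw] at hp

lemma mem_halfCircle_iff (hp : ‖p‖ = 1) (hw : ‖w‖ = 1) (hpw : ⟪p, w⟫ = 0) :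
    x ∈ halfCircle p w ↔ ‖x‖ = 1 ∧ ∃ α β : ℝ, 0 ≤ β ∧ x = α • p + β • w := by
  constructor
  · rintro ⟨t, ⟨ht0, htπ⟩, rfl⟩
    refine ⟨?_, _, _, Real.sin_nonneg_of_nonneg_of_le_pi ht0 htπ, rfl⟩
    have := norm_add_smul_sq_of_inner_eq_zero hp hw hpw (Real.cos t) (Real.sin t)
    rw [Real.cos_sq_add_sin_sq] at this
    exact (pow_eq_one_iff_of_nonneg (norm_nonneg _) two_ne_zero).1 this
  · rintro ⟨hx, α, β, hβ, rfl⟩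
    have h1 : α ^ 2 + β ^ 2 = 1 := by
      rw [← norm_add_smul_sq_of_inner_eq_zero hp hw hpw, hx, one_pow]
    have hα1 : -1 ≤ α := by nlinarith
    have hα2 : α ≤ 1 := by nlinarith
    refine ⟨Real.arccos α, ⟨Real.arccos_nonneg α, Real.arccos_le_pi α⟩, ?_⟩
    rw [Real.cos_arccos hα1 hα2, Real.sin_arccos, show 1 - α ^ 2 = β ^ 2 by linarith,
      Real.sqrt_sq hβ]

lemma mem_halfCircle_or_neg_mem (hp : ‖p‖ = 1) (hw : ‖w‖ = 1) (hpw : ⟪p, w⟫ = 0)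
    (hx : ‖x‖ = 1) (hxs : x ∈ Submodule.span ℝ {p, w}) :
    x ∈ halfCircle p w ∨ -x ∈ halfCircle p w := by
  obtain ⟨α, β, rfl⟩ := Submodule.mem_span_pair.1 hxs
  rcases le_total 0 β with hβ | hβ
  · exact Or.inl ((mem_halfCircle_iff hp hw hpw).2 ⟨hx, α, β, hβ, rfl⟩)
  · refine Or.inr ((mem_halfCircle_iff hp hw hpw).2 ⟨by rwa [norm_neg], -α, -β, by linarith, ?_⟩)
    simp only [neg_smul, neg_add]

lemma eq_or_eq_neg_of_mem_halfCircle_of_neg_mem (hp : ‖p‖ = 1) (hw : ‖w‖ = 1)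
    (hpw : ⟪p, w⟫ = 0) (hx : x ∈ halfCircle p w) (hnx : -x ∈ halfCircle p w) :
    x = p ∨ x = -p := by
  obtain ⟨hx1, α, β, hβ, hxe⟩ := (mem_halfCircle_iff hp hw hpw).1 hx
  obtain ⟨-, α', β', hβ', hnxe⟩ := (mem_halfCircle_iff hp hw hpw).1 hnx
  have inner_w : ∀ γ δ : ℝ, ⟪γ • p + δ • w, w⟫ = δ := fun γ δ => by
    rw [inner_add_left, real_inner_smul_left, real_inner_smul_left, hpw,
      real_inner_self_eq_norm_sq, hw]
    ring
  have hβ0 : β = 0 := by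
    have h1 := inner_w α β
    have h2 := inner_w α' β'
    rw [← hxe] at h1
    rw [← hnxe, inner_neg_left, h1] at h2
    linarith
  exact eq_or_eq_neg_of_eq_smul hx1 hp (by simpa [hβ0] using hxe)

end HalfCircles

section Curves

def arcCurve (a b : E3) : Curve := (arc a b, {a, b})

def halfCircleCurve (v : E3 → E3) (p : E3) : Curve := (halfCircle p (v p), {p, -p})

def Crosses (c d : Curve) : Prop := ∃ x, x ∈ c.1 ∧ x ∈ d.1 ∧ x ∉ c.2 ∧ x ∉ d.2

lemma Crosses.symm {c d : Curve} : Crosses c d → Crosses d c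
  | ⟨x, hx₁, hx₂, hx₃, hx₄⟩ => ⟨x, hx₂, hx₁, hx₄, hx₃⟩

lemma arcCurve_comm (a b : E3) : arcCurve a b = arcCurve b a := by
  rw [arcCurve, arcCurve, arc_comm, Set.pair_comm]

lemma arcCurve_eq_arcCurve_iff {a b c d : E3} :
    arcCurve a b = arcCurve c d ↔ a = c ∧ b = d ∨ a = d ∧ b = c := by
  refine ⟨fun h => Set.pair_eq_pair_iff.1 (congrArg Prod.snd h), ?_⟩
  rintro (⟨rfl, rfl⟩ | ⟨rfl, rfl⟩)
  · rfl
  · exact arcCurve_comm _ _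

lemma arcCurve_ne_halfCircleCurve {a b : E3} (h : b ≠ -a) (v : E3 → E3) (p : E3) :
    arcCurve a b ≠ halfCircleCurve v p := fun he => by
  rcases Set.pair_eq_pair_iff.1 (congrArg Prod.snd he) with ⟨rfl, rfl⟩ | ⟨rfl, rfl⟩
  · exact h rfl
  · exact h (neg_neg _).symm

end Curves

section Phat

structure GenPosOnSphere (P : Set E3) : Prop where
  subset_unitSphere : P ⊆ unitSphere
  genPos : GenPos P
  neg_notMem : ∀ p ∈ P, -p ∉ P

open Classical in
def rep (P : Set E3) (y : E3) : E3 := if y ∈ P then y else -y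

variable {P : Set E3} {a b c y : E3}

lemma mem_phat_iff : y ∈ phat P ↔ y ∈ P ∨ -y ∈ P := by
  simp [phat]

lemma neg_mem_phat (hy : y ∈ phat P) : -y ∈ phat P := by
  rw [mem_phat_iff, neg_neg] at *
  exact hy.symm

lemma rep_mem (hy : y ∈ phat P) : rep P y ∈ P := by
  unfold rep
  split_ifs with h
  · exact h
  · exact (mem_phat_iff.1 hy).resolve_left h

lemma rep_eq_or_eq_neg (P : Set E3) (y : E3) : rep P y = y ∨ rep P y = -y := by
  unfold rep
  split_ifs <;> simp

lemma rep_of_mem (hy : y ∈ P) : rep P y = y := if_pos hy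

lemma span_rep_pair (P : Set E3) (a b : E3) :
    Submodule.span ℝ {rep P a, rep P b} = Submodule.span ℝ {a, b} :=
  span_pair_eq_of_eq_or_eq_neg (rep_eq_or_eq_neg P a) (rep_eq_or_eq_neg P b)

lemma mem_phat_of_eq_or_eq_neg {A : E3} (hA : A ∈ P) (ha : a = A ∨ a = -A) : a ∈ phat P := by
  rcases ha with rfl | rfl
  · exact Or.inl hA
  · exact neg_mem_phat (Or.inl hA)

namespace GenPosOnSphere

variable (hP : GenPosOnSphere P)
include hP

lemma norm_eq_one (hy : y ∈ phat P) : ‖y‖ = 1 := by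
  rcases mem_phat_iff.1 hy with h | h
  · exact hP.subset_unitSphere h
  · simpa [unitSphere] using hP.subset_unitSphere h

lemma neg_ne_self (hy : y ∈ phat P) : -y ≠ y := fun h => by
  have h2 : (2 : ℝ) • y = 0 := by
    rw [two_smul]
    nth_rewrite 1 [← h]
    exact neg_add_cancel y
  have := hP.norm_eq_one hy
  simp [smul_eq_zero.1 h2 |>.resolve_left two_ne_zero] at this

lemma rep_eq_of_eq_or_eq_neg {A : E3} (hA : A ∈ P) (ha : a = A ∨ a = -A) : rep P a = A := by
  rcases ha with rfl | rfl
  · exact rep_of_mem hA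
  · simp [rep, hP.neg_notMem A hA]

lemma rep_neg (hy : y ∈ phat P) : rep P (-y) = rep P y := by
  refine hP.rep_eq_of_eq_or_eq_neg (rep_mem hy) ?_
  rcases rep_eq_or_eq_neg P y with h | h
  · exact Or.inr (by rw [h])
  · exact Or.inl h.symm

lemma rep_eq_rep_iff (ha : a ∈ phat P) (hb : b ∈ phat P) :
    rep P b = rep P a ↔ b = a ∨ b = -a := by
  refine ⟨fun h => ?_, fun h => ?_⟩
  · rcases rep_eq_or_eq_neg P a with ha' | ha' <;> rcases rep_eq_or_eq_neg P b with hb' | hb' <;>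
      rw [ha', hb'] at h
    · exact Or.inl h
    · exact Or.inr (neg_eq_iff_eq_neg.1 h)
    · exact Or.inr h
    · exact Or.inl (neg_inj.1 h)
  · rcases h with rfl | rfl
    · rfl
    · exact hP.rep_neg ha

lemma rep_ne_rep_iff (ha : a ∈ phat P) (hb : b ∈ phat P) :
    rep P a ≠ rep P b ↔ b ≠ a ∧ b ≠ -a := by
  rw [ne_comm, Ne, hP.rep_eq_rep_iff ha hb, not_or]

lemma linearIndependent_of_rep_ne (ha : a ∈ phat P) (hb : b ∈ phat P) (h : rep P a ≠ rep P b) :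
    LinearIndependent ℝ ![a, b] := by
  refine linearIndependent_pair_of_norm_eq_one (hP.norm_eq_one ha) (hP.norm_eq_one hb) ?_ ?_ <;>
  · intro hab
    exact h ((hP.rep_eq_rep_iff ha hb).2 (by simp [hab])).symm

lemma notMem_span_of_rep_ne (ha : a ∈ phat P) (hb : b ∈ phat P) (hc : c ∈ phat P)
    (hab : rep P a ≠ rep P b) (hac : rep P a ≠ rep P c) (hbc : rep P b ≠ rep P c) :
    a ∉ Submodule.span ℝ {b, c} := by
  have hli := hP.genPos _ (rep_mem ha) _ (rep_mem hb) _ (rep_mem hc) hab hac hbc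
  rw [← span_rep_pair P b c]
  intro haS
  refine notMem_span_pair_of_linearIndependent hli ?_
  rcases rep_eq_or_eq_neg P a with h | h <;> rw [h]
  · exact haS
  · exact Submodule.neg_mem _ haS

end GenPosOnSphere

lemma GenPosOnSphere.of_three_le_ncard (hPS : P ⊆ unitSphere) (hgen : GenPos P)
    (hk : 3 ≤ P.ncard) : GenPosOnSphere P := by
  refine ⟨hPS, hgen, fun p hp hnp => ?_⟩
  have hp1 : ‖p‖ = 1 := hPS hp
  have hpn : p ≠ -p := fun h => by
    have : p = 0 := by simpa [eq_neg_iff_add_eq_zero, ← two_smul ℝ] using h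
    simp [this] at hp1
  have hlt : ({p, -p} : Set E3).ncard < P.ncard := by
    rw [Set.ncard_pair hpn]
    omega
  obtain ⟨r, hr, hrp⟩ := Set.exists_mem_notMem_of_ncard_lt_ncard hlt
  simp only [Set.mem_insert_iff, Set.mem_singleton_iff, not_or] at hrp
  refine notMem_span_pair_of_linearIndependent
    (hgen p hp (-p) hnp r hr hpn (Ne.symm hrp.1) (Ne.symm hrp.2)) ?_
  rw [← neg_neg p]
  exact Submodule.neg_mem _ (Submodule.subset_span (by simp))

end Phat

structure IsCrossingQuad (P : Set E3) (a b c d : E3) : Prop where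
  subset_phat : {a, b, c, d} ⊆ phat P
  nodup : [rep P a, rep P b, rep P c, rep P d].Nodup
  inter_nonempty : (arc a b ∩ arc c d).Nonempty

namespace IsCrossingQuad

variable {P : Set E3} {a b c d : E3}

lemma mem (h : IsCrossingQuad P a b c d) :
    a ∈ phat P ∧ b ∈ phat P ∧ c ∈ phat P ∧ d ∈ phat P :=
  ⟨h.subset_phat (by simp), h.subset_phat (by simp), h.subset_phat (by simp),
    h.subset_phat (by simp)⟩

lemma swap_left (h : IsCrossingQuad P a b c d) : IsCrossingQuad P b a c d :=
  ⟨by rw [Set.insert_comm]; exact h.subset_phat, (List.Perm.swap _ _ _).nodup_iff.1 h.nodup,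
    by rw [arc_comm]; exact h.inter_nonempty⟩

lemma swap_right (h : IsCrossingQuad P a b c d) : IsCrossingQuad P a b d c :=
  ⟨by rw [Set.pair_comm]; exact h.subset_phat,
    (((List.Perm.swap _ _ []).cons _).cons _).nodup_iff.1 h.nodup,
    by rw [arc_comm d]; exact h.inter_nonempty⟩

lemma symm (h : IsCrossingQuad P a b c d) : IsCrossingQuad P c d a b :=
  ⟨fun y hy => h.subset_phat <| by
      simp only [Set.mem_insert_iff, Set.mem_singleton_iff] at hy ⊢
      tauto,
    (List.perm_append_comm (l₁ := [rep P a, rep P b])).nodup_iff.1 h.nodup,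
    by rw [Set.inter_comm]; exact h.inter_nonempty⟩

end IsCrossingQuad

namespace GenPosOnSphere

variable {P : Set E3} (hP : GenPosOnSphere P)
include hP

section ArcArc

variable {a b c d a' b' c' d' x x' : E3}

lemma notMem_span_of_isCrossingQuad (h : IsCrossingQuad P a b c d) :
    a ∉ Submodule.span ℝ {c, d} ∧ b ∉ Submodule.span ℝ {c, d} ∧
      c ∉ Submodule.span ℝ {a, b} ∧ d ∉ Submodule.span ℝ {a, b} := by
  obtain ⟨ha, hb, hc, hd⟩ := h.mem
  obtain ⟨hab, hac, had, hbc, hbd, hcd⟩ := nodup_four_iff.1 h.nodup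
  exact ⟨hP.notMem_span_of_rep_ne ha hc hd hac had hcd,
    hP.notMem_span_of_rep_ne hb hc hd hbc hbd hcd,
    hP.notMem_span_of_rep_ne hc ha hb (Ne.symm hac) (Ne.symm hbc) hab,
    hP.notMem_span_of_rep_ne hd ha hb (Ne.symm had) (Ne.symm hbd) hab⟩

lemma notMem_endpoints_of_isCrossingQuad (h : IsCrossingQuad P a b c d) (hx₁ : x ∈ arc a b)
    (hx₂ : x ∈ arc c d) : x ∉ ({a, b} : Set E3) ∧ x ∉ ({c, d} : Set E3) := by
  obtain ⟨ha, hb, hc, hd⟩ := hP.notMem_span_of_isCrossingQuad h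
  have hxab := arc_subset_span a b hx₁
  have hxcd := arc_subset_span c d hx₂
  simp only [Set.mem_insert_iff, Set.mem_singleton_iff, not_or]
  exact ⟨⟨fun h => ha (h ▸ hxcd), fun h => hb (h ▸ hxcd)⟩,
    ⟨fun h => hc (h ▸ hxab), fun h => hd (h ▸ hxab)⟩⟩

/-- The great circles of the two arcs meet in `±x`; the sign of the crossing point fixes the
signs of all four endpoints. -/
lemma eq_or_eq_neg_of_isCrossingQuad (h : IsCrossingQuad P a b c d)
    (h' : IsCrossingQuad P a' b' c' d') (ha' : a' = a ∨ a' = -a) (hb' : b' = b ∨ b' = -b)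
    (hc' : c' = c ∨ c' = -c) (hd' : d' = d ∨ d' = -d) :
    ((a', b'), (c', d')) = ((a, b), (c, d)) ∨ ((a', b'), (c', d')) = -((a, b), (c, d)) := by
  obtain ⟨ha, hb, hc, hd⟩ := h.mem
  obtain ⟨hab, -, -, -, -, hcd⟩ := nodup_four_iff.1 h.nodup
  have li_ab := hP.linearIndependent_of_rep_ne ha hb hab
  have li_cd := hP.linearIndependent_of_rep_ne hc hd hcd
  obtain ⟨-, -, -, hdab⟩ := hP.notMem_span_of_isCrossingQuad h
  have hK := finrank_span_pair_inf_span_pair li_ab li_cd hdab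
  obtain ⟨x, hx₁, hx₂⟩ := h.inter_nonempty
  obtain ⟨x', hx₁', hx₂'⟩ := h'.inter_nonempty
  obtain ⟨hxab, hxcd⟩ := hP.notMem_endpoints_of_isCrossingQuad h hx₁ hx₂
  simp only [Set.mem_insert_iff, Set.mem_singleton_iff, not_or] at hxab hxcd
  have hxK : x ∈ Submodule.span ℝ {a, b} ⊓ Submodule.span ℝ {c, d} :=
    ⟨arc_subset_span a b hx₁, arc_subset_span c d hx₂⟩
  have hx'K : x' ∈ Submodule.span ℝ {a, b} ⊓ Submodule.span ℝ {c, d} :=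
    ⟨span_pair_eq_of_eq_or_eq_neg (K := ℝ) ha' hb' ▸ arc_subset_span a' b' hx₁',
      span_pair_eq_of_eq_or_eq_neg (K := ℝ) hc' hd' ▸ arc_subset_span c' d' hx₂'⟩
  have hx1 := ((mem_arc_iff li_ab).1 hx₁).1
  have hx'1 := ((mem_arc_iff (linearIndependent_pair_of_eq_or_eq_neg li_ab ha' hb')).1 hx₁').1
  have signs := fun {y z y' z' : E3} (hyz : LinearIndependent ℝ ![y, z]) (hy : y ∈ phat P)
      (hz : z ∈ phat P) => signs_eq_of_mem_arc (a' := y') (b' := z') (x := x) hyz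
    (hP.norm_eq_one hy) (hP.norm_eq_one hz)
  rcases eq_or_eq_neg_of_finrank_eq_one hK hxK hx'K hx1 hx'1 with rfl | rfl
  · obtain ⟨rfl, rfl⟩ := signs li_ab ha hb ha' hb' hx₁ hx₁' hxab.1 hxab.2
    obtain ⟨rfl, rfl⟩ := signs li_cd hc hd hc' hd' hx₂ hx₂' hxcd.1 hxcd.2
    exact Or.inl rfl
  · have neg_sign : ∀ {y y' : E3}, y' = y ∨ y' = -y → -y' = y ∨ -y' = -y := by
      rintro y y' (rfl | rfl) <;> simp
    obtain ⟨h₁, h₂⟩ := signs li_ab ha hb (neg_sign ha') (neg_sign hb') hx₁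
      (by simpa using neg_mem_arc_neg hx₁') hxab.1 hxab.2
    obtain ⟨h₃, h₄⟩ := signs li_cd hc hd (neg_sign hc') (neg_sign hd') hx₂
      (by simpa using neg_mem_arc_neg hx₂') hxcd.1 hxcd.2
    right
    simp [← h₁, ← h₂, ← h₃, ← h₄]

lemma exists_isCrossingQuad {A B C D : E3} (hA : A ∈ P) (hB : B ∈ P) (hC : C ∈ P) (hD : D ∈ P)
    (h : [A, B, C, D].Nodup) :
    ∃ a b c d, (a = A ∨ a = -A) ∧ (b = B ∨ b = -B) ∧ (c = C ∨ c = -C) ∧ (d = D ∨ d = -D) ∧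
      IsCrossingQuad P a b c d := by
  obtain ⟨hAB, hAC, hAD, hBC, hBD, hCD⟩ := nodup_four_iff.1 h
  have mem : ∀ {Y : E3}, Y ∈ P → Y ∈ phat P := fun hY => Or.inl hY
  have rep_ne : ∀ {Y Z : E3}, Y ∈ P → Z ∈ P → Y ≠ Z → rep P Y ≠ rep P Z := fun hY hZ hYZ => by
    rwa [rep_of_mem hY, rep_of_mem hZ]
  have hK := finrank_span_pair_inf_span_pair
    (hP.linearIndependent_of_rep_ne (mem hA) (mem hB) (rep_ne hA hB hAB))
    (hP.linearIndependent_of_rep_ne (mem hC) (mem hD) (rep_ne hC hD hCD))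
    (hP.notMem_span_of_rep_ne (mem hD) (mem hA) (mem hB) (rep_ne hD hA hAD.symm)
      (rep_ne hD hB hBD.symm) (rep_ne hA hB hAB))
  obtain ⟨x, ⟨hxAB, hxCD⟩, hx⟩ := exists_norm_eq_one_mem hK
  obtain ⟨a, b, ha, hb, hxab⟩ := exists_signs_mem_arc hx hxAB
  obtain ⟨c, d, hc, hd, hxcd⟩ := exists_signs_mem_arc hx hxCD
  refine ⟨a, b, c, d, ha, hb, hc, hd, ⟨?_, ?_, x, hxab, hxcd⟩⟩
  · simp only [Set.insert_subset_iff, Set.singleton_subset_iff]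
    exact ⟨mem_phat_of_eq_or_eq_neg hA ha, mem_phat_of_eq_or_eq_neg hB hb,
      mem_phat_of_eq_or_eq_neg hC hc, mem_phat_of_eq_or_eq_neg hD hd⟩
  · rwa [hP.rep_eq_of_eq_or_eq_neg hA ha, hP.rep_eq_of_eq_or_eq_neg hB hb,
      hP.rep_eq_of_eq_or_eq_neg hC hc, hP.rep_eq_of_eq_or_eq_neg hD hd]

/-- Either the arcs lie on one great circle, where the signs of the endpoints are forced, or
their great circles meet only in `±a`. -/
lemma rep_ne_of_crosses (ha : a ∈ phat P) (hb : b ∈ phat P) (hc : c ∈ phat P)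
    (hd : d ∈ phat P) (hab : rep P a ≠ rep P b) (hcd : rep P c ≠ rep P d)
    (hne : arcCurve a b ≠ arcCurve c d) (hcr : Crosses (arcCurve a b) (arcCurve c d)) :
    rep P c ≠ rep P a := by
  intro hca
  obtain ⟨x, hx₁, hx₂, hxab, -⟩ := hcr
  have hc' : c = a ∨ c = -a := (hP.rep_eq_rep_iff ha hc).1 hca
  have li_ab := hP.linearIndependent_of_rep_ne ha hb hab
  have li_cd := hP.linearIndependent_of_rep_ne hc hd hcd
  simp only [arcCurve, Set.mem_insert_iff, Set.mem_singleton_iff, not_or] at hx₁ hx₂ hxab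
  by_cases hdb : rep P d = rep P b
  · obtain ⟨rfl, rfl⟩ := signs_eq_of_mem_arc li_ab (hP.norm_eq_one ha) (hP.norm_eq_one hb) hc'
      ((hP.rep_eq_rep_iff hb hd).1 hdb) hx₁ hx₂ hxab.1 hxab.2
    exact hne rfl
  · have hK := finrank_span_pair_inf_span_pair li_ab li_cd
      (hP.notMem_span_of_rep_ne hd ha hb (hca ▸ hcd.symm) hdb hab)
    have haK : a ∈ Submodule.span ℝ {a, b} ⊓ Submodule.span ℝ {c, d} := by
      refine ⟨Submodule.subset_span (by simp), ?_⟩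
      rw [span_pair_eq_of_eq_or_eq_neg hc' (Or.inl rfl)]
      exact Submodule.subset_span (by simp)
    rcases eq_or_eq_neg_of_finrank_eq_one hK haK
      ⟨arc_subset_span a b hx₁, arc_subset_span c d hx₂⟩ (hP.norm_eq_one ha)
      ((mem_arc_iff li_ab).1 hx₁).1 with h | h
    · exact hxab.1 h
    · exact neg_notMem_arc li_ab (h ▸ hx₁)

lemma isCrossingQuad_neg (h : IsCrossingQuad P a b c d) : IsCrossingQuad P (-a) (-b) (-c) (-d) := by
  obtain ⟨ha, hb, hc, hd⟩ := h.mem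
  obtain ⟨x, hx₁, hx₂⟩ := h.inter_nonempty
  refine ⟨?_, ?_, -x, neg_mem_arc_neg hx₁, neg_mem_arc_neg hx₂⟩
  · simp [Set.insert_subset_iff, neg_mem_phat, ha, hb, hc, hd]
  · rw [hP.rep_neg ha, hP.rep_neg hb, hP.rep_neg hc, hP.rep_neg hd]
    exact h.nodup

end ArcArc

end GenPosOnSphere

structure IsAdmissibleDir (P : Set E3) (p w : E3) : Prop where
  norm_eq_one : ‖w‖ = 1
  inner_eq_zero : ⟪p, w⟫ = 0
  eq_or_eq_neg_of_mem_span : ∀ y ∈ phat P, y ∈ Submodule.span ℝ {p, w} → y = p ∨ y = -p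

lemma GenPosOnSphere.isAdmissibleDir {P : Set E3} (hP : GenPosOnSphere P) {p w : E3}
    (hw : ‖w‖ = 1 ∧ ⟪p, w⟫ = 0)
    (hgc : ((Submodule.span ℝ {p, w} : Set E3) ∩ unitSphere) ∩ phat P = {p, -p}) :
    IsAdmissibleDir P p w :=
  ⟨hw.1, hw.2, fun y hy hyS => by
    have : y ∈ ((Submodule.span ℝ {p, w} : Set E3) ∩ unitSphere) ∩ phat P :=
      ⟨⟨hyS, hP.norm_eq_one hy⟩, hy⟩
    simpa [hgc] using this⟩

structure IsCrossingTriple (P : Set E3) (p w b c : E3) : Prop where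
  mem_left : b ∈ phat P
  mem_right : c ∈ phat P
  nodup : [p, rep P b, rep P c].Nodup
  inter_nonempty : (halfCircle p w ∩ arc b c).Nonempty

lemma IsCrossingTriple.swap {P : Set E3} {p w b c : E3} (h : IsCrossingTriple P p w b c) :
    IsCrossingTriple P p w c b :=
  ⟨h.mem_right, h.mem_left, ((List.Perm.swap _ _ []).cons _).nodup_iff.1 h.nodup,
    by rw [arc_comm]; exact h.inter_nonempty⟩

namespace GenPosOnSphere

variable {P : Set E3} (hP : GenPosOnSphere P)
include hP

section HalfCircleArc

variable {p q w b c b' c' x y : E3} (hp : p ∈ P) (hw : IsAdmissibleDir P p w)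
include hp hw

lemma norm_eq_one_of_mem_halfCircle (hx : x ∈ halfCircle p w) : ‖x‖ = 1 :=
  (((mem_halfCircle_iff (hP.subset_unitSphere hp) hw.norm_eq_one hw.inner_eq_zero).1 hx).1)

lemma linearIndependent_of_isAdmissibleDir : LinearIndependent ℝ ![p, w] :=
  linearIndependent_of_inner_eq_zero (hP.subset_unitSphere hp) hw.norm_eq_one hw.inner_eq_zero

lemma notMem_span_of_isAdmissibleDir (hy : y ∈ phat P) (hyp : rep P y ≠ p) :
    y ∉ Submodule.span ℝ {p, w} := fun hyS =>
  hyp (hP.rep_eq_of_eq_or_eq_neg hp (hw.eq_or_eq_neg_of_mem_span y hy hyS))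

lemma notMem_endpoints_of_isCrossingTriple (h : IsCrossingTriple P p w b c)
    (hx₁ : x ∈ halfCircle p w) (hx₂ : x ∈ arc b c) :
    x ∉ ({p, -p} : Set E3) ∧ x ∉ ({b, c} : Set E3) := by
  obtain ⟨hpb, hpc, hbc⟩ := nodup_three_iff.1 h.nodup
  have hpS : p ∉ Submodule.span ℝ {b, c} := hP.notMem_span_of_rep_ne (Or.inl hp) h.mem_left
    h.mem_right (by rwa [rep_of_mem hp]) (by rwa [rep_of_mem hp]) hbc
  have hbS := hP.notMem_span_of_isAdmissibleDir hp hw h.mem_left (Ne.symm hpb)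
  have hcS := hP.notMem_span_of_isAdmissibleDir hp hw h.mem_right (Ne.symm hpc)
  have hxbc := arc_subset_span b c hx₂
  have hxpw := halfCircle_subset_span p w hx₁
  simp only [Set.mem_insert_iff, Set.mem_singleton_iff, not_or]
  refine ⟨⟨fun h => hpS (h ▸ hxbc), fun h => hpS ?_⟩,
    ⟨fun h => hbS (h ▸ hxpw), fun h => hcS (h ▸ hxpw)⟩⟩
  rw [← neg_neg p, ← h]
  exact Submodule.neg_mem _ hxbc

/-- Both great circles pass through `p`, so they meet only in `±p`. -/
lemma false_of_rep_eq_of_mem_halfCircle (hb : b ∈ phat P) (hc : c ∈ phat P)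
    (hbc : rep P b ≠ rep P c) (hbp : rep P b = p) (hx₁ : x ∈ halfCircle p w)
    (hx₂ : x ∈ arc b c) (hxp : x ∉ ({p, -p} : Set E3)) : False := by
  have hb' : b = p ∨ b = -p := (hP.rep_eq_rep_iff (Or.inl hp) hb).1 (by rw [hbp, rep_of_mem hp])
  have hK := finrank_span_pair_inf_span_pair (hP.linearIndependent_of_isAdmissibleDir hp hw)
    (hP.linearIndependent_of_rep_ne hb hc hbc)
    (hP.notMem_span_of_isAdmissibleDir hp hw hc (hbp ▸ hbc.symm))
  have hpK : p ∈ Submodule.span ℝ {p, w} ⊓ Submodule.span ℝ {b, c} := by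
    refine ⟨Submodule.subset_span (by simp), ?_⟩
    rw [span_pair_eq_of_eq_or_eq_neg hb' (Or.inl rfl)]
    exact Submodule.subset_span (by simp)
  rcases eq_or_eq_neg_of_finrank_eq_one hK hpK
    ⟨halfCircle_subset_span p w hx₁, arc_subset_span b c hx₂⟩ (hP.subset_unitSphere hp)
    (hP.norm_eq_one_of_mem_halfCircle hp hw hx₁) with h | h <;> simp [h] at hxp

/-- Only one of the two common points `±x` of the great circles lies on the half-circle. -/
lemma eq_of_isCrossingTriple (h : IsCrossingTriple P p w b c)
    (h' : IsCrossingTriple P p w b' c') (hb' : b' = b ∨ b' = -b) (hc' : c' = c ∨ c' = -c) :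
    b' = b ∧ c' = c := by
  obtain ⟨hpb, hpc, hbc⟩ := nodup_three_iff.1 h.nodup
  have li_bc := hP.linearIndependent_of_rep_ne h.mem_left h.mem_right hbc
  have hK := finrank_span_pair_inf_span_pair (hP.linearIndependent_of_isAdmissibleDir hp hw)
    li_bc (hP.notMem_span_of_isAdmissibleDir hp hw h.mem_right (Ne.symm hpc))
  obtain ⟨x, hx₁, hx₂⟩ := h.inter_nonempty
  obtain ⟨x', hx₁', hx₂'⟩ := h'.inter_nonempty
  obtain ⟨hxp, hxbc⟩ := hP.notMem_endpoints_of_isCrossingTriple hp hw h hx₁ hx₂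
  simp only [Set.mem_insert_iff, Set.mem_singleton_iff, not_or] at hxbc
  have hx'K : x' ∈ Submodule.span ℝ {p, w} ⊓ Submodule.span ℝ {b, c} :=
    ⟨halfCircle_subset_span p w hx₁',
      span_pair_eq_of_eq_or_eq_neg (K := ℝ) hb' hc' ▸ arc_subset_span b' c' hx₂'⟩
  rcases eq_or_eq_neg_of_finrank_eq_one hK
    ⟨halfCircle_subset_span p w hx₁, arc_subset_span b c hx₂⟩ hx'K
    (hP.norm_eq_one_of_mem_halfCircle hp hw hx₁)
    (hP.norm_eq_one_of_mem_halfCircle hp hw hx₁') with rfl | rfl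
  · exact signs_eq_of_mem_arc li_bc (hP.norm_eq_one h.mem_left) (hP.norm_eq_one h.mem_right)
      hb' hc' hx₂ hx₂' hxbc.1 hxbc.2
  · exact (hxp (eq_or_eq_neg_of_mem_halfCircle_of_neg_mem (hP.subset_unitSphere hp)
      hw.norm_eq_one hw.inner_eq_zero hx₁ hx₁')).elim

lemma exists_isCrossingTriple {B C : E3} (hB : B ∈ P) (hC : C ∈ P) (h : [p, B, C].Nodup) :
    ∃ b c, (b = B ∨ b = -B) ∧ (c = C ∨ c = -C) ∧ IsCrossingTriple P p w b c := by
  obtain ⟨hpB, hpC, hBC⟩ := nodup_three_iff.1 h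
  have hK := finrank_span_pair_inf_span_pair (hP.linearIndependent_of_isAdmissibleDir hp hw)
    (hP.linearIndependent_of_rep_ne (Or.inl hB) (Or.inl hC)
      (by rwa [rep_of_mem hB, rep_of_mem hC]))
    (hP.notMem_span_of_isAdmissibleDir hp hw (Or.inl hC) (by rwa [rep_of_mem hC, ne_comm]))
  obtain ⟨x, ⟨hxpw, hxBC⟩, hx⟩ := exists_norm_eq_one_mem hK
  obtain ⟨y, hyH, hyBC, hy⟩ : ∃ y ∈ halfCircle p w, y ∈ Submodule.span ℝ {B, C} ∧ ‖y‖ = 1 := by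
    rcases mem_halfCircle_or_neg_mem (hP.subset_unitSphere hp) hw.norm_eq_one hw.inner_eq_zero
      hx hxpw with hxH | hxH
    · exact ⟨x, hxH, hxBC, hx⟩
    · exact ⟨-x, hxH, Submodule.neg_mem _ hxBC, by rwa [norm_neg]⟩
  obtain ⟨b, c, hb, hc, hybc⟩ := exists_signs_mem_arc hy hyBC
  refine ⟨b, c, hb, hc, mem_phat_of_eq_or_eq_neg hB hb, mem_phat_of_eq_or_eq_neg hC hc, ?_,
    y, hyH, hybc⟩
  rwa [hP.rep_eq_of_eq_or_eq_neg hB hb, hP.rep_eq_of_eq_or_eq_neg hC hc]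

lemma notMem_of_mem_halfCircle (hq : q ∈ P) (hqp : q ≠ p) (hx : x ∈ halfCircle p w) :
    x ∉ ({q, -q} : Set E3) := by
  have hqS := hP.notMem_span_of_isAdmissibleDir hp hw (Or.inl hq) (by rwa [rep_of_mem hq])
  have hxS := halfCircle_subset_span p w hx
  rintro (rfl | h)
  · exact hqS hxS
  · rw [Set.mem_singleton_iff] at h
    exact hqS (by rw [← neg_neg q, ← h]; exact Submodule.neg_mem _ hxS)

end HalfCircleArc

lemma halfCircleCurve_injOn (v : E3 → E3) : Set.InjOn (halfCircleCurve v) P := by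
  intro p hp q hq he
  rcases Set.pair_eq_pair_iff.1 (congrArg Prod.snd he) with ⟨h, -⟩ | ⟨h, -⟩
  · exact h
  · exact (hP.neg_notMem q hq (h ▸ hp)).elim

lemma isCrossingQuad_iff {a b c d : E3} (ha : a ∈ phat P) (hb : b ∈ phat P) (hc : c ∈ phat P)
    (hd : d ∈ phat P) (hab : rep P a ≠ rep P b) (hcd : rep P c ≠ rep P d) :
    IsCrossingQuad P a b c d ↔
      arcCurve a b ≠ arcCurve c d ∧ Crosses (arcCurve a b) (arcCurve c d) := by
  constructor
  · intro h
    obtain ⟨-, hac, -, hbc, -, -⟩ := nodup_four_iff.1 h.nodup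
    obtain ⟨x, hx₁, hx₂⟩ := h.inter_nonempty
    refine ⟨fun he => ?_, x, hx₁, hx₂, hP.notMem_endpoints_of_isCrossingQuad h hx₁ hx₂⟩
    rcases arcCurve_eq_arcCurve_iff.1 he with ⟨rfl, -⟩ | ⟨-, rfl⟩
    · exact hac rfl
    · exact hbc rfl
  · rintro ⟨hne, hcr⟩
    have hca := hP.rep_ne_of_crosses ha hb hc hd hab hcd hne hcr
    have hcb := hP.rep_ne_of_crosses hb ha hc hd hab.symm hcd (by rwa [arcCurve_comm b])
      (by rwa [arcCurve_comm b])
    have hda := hP.rep_ne_of_crosses ha hb hd hc hab hcd.symm (by rwa [arcCurve_comm d])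
      (by rwa [arcCurve_comm d])
    have hdb := hP.rep_ne_of_crosses hb ha hd hc hab.symm hcd.symm
      (by rwa [arcCurve_comm b, arcCurve_comm d]) (by rwa [arcCurve_comm b, arcCurve_comm d])
    obtain ⟨x, hx₁, hx₂, -⟩ := hcr
    refine ⟨by simp [Set.insert_subset_iff, ha, hb, hc, hd], nodup_four_iff.2
      ⟨hab, Ne.symm hca, Ne.symm hda, Ne.symm hcb, Ne.symm hdb, hcd⟩, x, hx₁, hx₂⟩

lemma isCrossingTriple_iff {v : E3 → E3} {p b c : E3} (hp : p ∈ P)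
    (hw : IsAdmissibleDir P p (v p)) (hb : b ∈ phat P) (hc : c ∈ phat P)
    (hbc : rep P b ≠ rep P c) :
    IsCrossingTriple P p (v p) b c ↔ Crosses (halfCircleCurve v p) (arcCurve b c) := by
  constructor
  · intro h
    obtain ⟨x, hx₁, hx₂⟩ := h.inter_nonempty
    exact ⟨x, hx₁, hx₂, hP.notMem_endpoints_of_isCrossingTriple hp hw h hx₁ hx₂⟩
  · rintro ⟨x, hx₁, hx₂, hxp, -⟩
    have hbp : rep P b ≠ p := fun h =>
      hP.false_of_rep_eq_of_mem_halfCircle hp hw hb hc hbc h hx₁ hx₂ hxp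
    have hcp : rep P c ≠ p := fun h =>
      hP.false_of_rep_eq_of_mem_halfCircle hp hw hc hb hbc.symm h hx₁ (by rwa [arc_comm]) hxp
    exact ⟨hb, hc, nodup_three_iff.2 ⟨Ne.symm hbp, Ne.symm hcp, hbc⟩, x, hx₁, hx₂⟩

lemma crosses_halfCircleCurve_iff {v : E3 → E3} {p q : E3} (hp : p ∈ P) (hq : q ∈ P)
    (hpq : p ≠ q) (hwp : IsAdmissibleDir P p (v p)) (hwq : IsAdmissibleDir P q (v q)) :
    Crosses (halfCircleCurve v p) (halfCircleCurve v q) ↔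
      (halfCircle p (v p) ∩ halfCircle q (v q)).Nonempty :=
  ⟨fun ⟨x, hx₁, hx₂, _⟩ => ⟨x, hx₁, hx₂⟩, fun ⟨x, hx₁, hx₂⟩ =>
    ⟨x, hx₁, hx₂, hP.notMem_of_mem_halfCircle hq hwq hp hpq hx₂,
      hP.notMem_of_mem_halfCircle hp hwp hq hpq.symm hx₁⟩⟩

end GenPosOnSphere

section CrossingCount

variable {P P' : Finset E3} {v : E3 → E3}

open Classical in
def phatFinset (P : Finset E3) : Finset E3 := P ∪ P.image Neg.neg

lemma mem_phatFinset {y : E3} : y ∈ phatFinset P ↔ y ∈ phat (P : Set E3) := by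
  simp [phatFinset, mem_phat_iff, neg_eq_iff_eq_neg]

open Classical in
def crossingQuads (P : Finset E3) : Finset ((E3 × E3) × (E3 × E3)) :=
  {q ∈ (phatFinset P ×ˢ phatFinset P) ×ˢ (phatFinset P ×ˢ phatFinset P) |
    IsCrossingQuad P q.1.1 q.1.2 q.2.1 q.2.2}

lemma mem_crossingQuads {q : (E3 × E3) × (E3 × E3)} :
    q ∈ crossingQuads P ↔ IsCrossingQuad P q.1.1 q.1.2 q.2.1 q.2.2 := by
  simp only [crossingQuads, Finset.mem_filter, Finset.mem_product, mem_phatFinset,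
    and_iff_right_iff_imp]
  intro h
  obtain ⟨ha, hb, hc, hd⟩ := h.mem
  exact ⟨⟨ha, hb⟩, hc, hd⟩

def repQuad (P : Set E3) (q : (E3 × E3) × (E3 × E3)) : (E3 × E3) × (E3 × E3) :=
  ((rep P q.1.1, rep P q.1.2), (rep P q.2.1, rep P q.2.2))

def arcArcPair (q : (E3 × E3) × (E3 × E3)) : Sym2 Curve :=
  s(arcCurve q.1.1 q.1.2, arcCurve q.2.1 q.2.2)

lemma card_crossingQuads_eq_two_mul_card_image_left :
    #(crossingQuads P) = 2 * #((crossingQuads P).image fun q => (arcCurve q.1.1 q.1.2, q.2)) := by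
  have := card_image_eq_two_mul_card_image_comp (crossingQuads P) id
    (fun q => (arcCurve q.1.1 q.1.2, q.2)) (fun q => ((q.1.2, q.1.1), q.2))
    (fun q hq => mem_crossingQuads.2 (mem_crossingQuads.1 hq).swap_left)
    (fun q hq h => (nodup_four_iff.1 (mem_crossingQuads.1 hq).nodup).1
      (congrArg (rep P ·.1.2) h))
    (fun q _ => by simp only [id, arcCurve_comm])
    (fun ⟨⟨a, b⟩, r⟩ _ ⟨⟨a', b'⟩, r'⟩ _ he => by
      simp only [id, Prod.mk.injEq, arcCurve_eq_arcCurve_iff] at he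
      rcases he with ⟨⟨rfl, rfl⟩ | ⟨rfl, rfl⟩, rfl⟩ <;> simp)
  rwa [Finset.image_id] at this

lemma card_image_left_eq_two_mul_card_image_pair :
    #((crossingQuads P).image fun q => (arcCurve q.1.1 q.1.2, q.2)) =
      2 * #((crossingQuads P).image fun q => (arcCurve q.1.1 q.1.2, arcCurve q.2.1 q.2.2)) :=
  card_image_eq_two_mul_card_image_comp (crossingQuads P)
    (fun q => (arcCurve q.1.1 q.1.2, q.2)) (fun e => (e.1, arcCurve e.2.1 e.2.2))
    (fun q => (q.1, (q.2.2, q.2.1)))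
    (fun q hq => mem_crossingQuads.2 (mem_crossingQuads.1 hq).swap_right)
    (fun q hq h => (nodup_four_iff.1 (mem_crossingQuads.1 hq).nodup).2.2.2.2.2
      (congrArg (rep P ·.2.2) h))
    (fun q _ => by simp only [arcCurve_comm q.2.1])
    (fun ⟨⟨a, b⟩, c, d⟩ _ ⟨⟨a', b'⟩, c', d'⟩ _ he => by
      simp only [Prod.mk.injEq, arcCurve_eq_arcCurve_iff (a := c')] at he
      rcases he with ⟨h, ⟨rfl, rfl⟩ | ⟨rfl, rfl⟩⟩ <;> simp [h])

namespace GenPosOnSphere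

variable (hP : GenPosOnSphere (P : Set E3))
include hP

lemma image_repQuad_crossingQuads :
    (crossingQuads P).image (repQuad P) = distinctQuads P := by
  ext ⟨⟨A, B⟩, C, D⟩
  simp only [Finset.mem_image, mem_crossingQuads, distinctQuads, Finset.mem_filter,
    Finset.mem_product]
  constructor
  · rintro ⟨⟨⟨a, b⟩, c, d⟩, h, he⟩
    simp only [repQuad, Prod.mk.injEq] at he
    obtain ⟨⟨rfl, rfl⟩, rfl, rfl⟩ := he
    obtain ⟨ha, hb, hc, hd⟩ := h.mem
    exact ⟨⟨⟨rep_mem ha, rep_mem hb⟩, rep_mem hc, rep_mem hd⟩, h.nodup⟩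
  · rintro ⟨⟨⟨hA, hB⟩, hC, hD⟩, hnd⟩
    obtain ⟨a, b, c, d, ha, hb, hc, hd, h⟩ := hP.exists_isCrossingQuad hA hB hC hD hnd
    refine ⟨((a, b), c, d), h, ?_⟩
    simp only [repQuad, hP.rep_eq_of_eq_or_eq_neg hA ha, hP.rep_eq_of_eq_or_eq_neg hB hb,
      hP.rep_eq_of_eq_or_eq_neg hC hc, hP.rep_eq_of_eq_or_eq_neg hD hd]

lemma card_crossingQuads_eq_two_mul_card_distinctQuads :
    #(crossingQuads P) = 2 * #(distinctQuads P) := by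
  have := card_image_eq_two_mul_card_image_comp (crossingQuads P) id (repQuad P) Neg.neg
    (fun q hq => mem_crossingQuads.2 (hP.isCrossingQuad_neg (mem_crossingQuads.1 hq)))
    (fun q hq h => hP.neg_ne_self (mem_crossingQuads.1 hq).mem.1 (congrArg (·.1.1) h))
    (fun q hq => by
      obtain ⟨ha, hb, hc, hd⟩ := (mem_crossingQuads.1 hq).mem
      simp only [id, repQuad, Prod.fst_neg, Prod.snd_neg, hP.rep_neg ha, hP.rep_neg hb,
        hP.rep_neg hc, hP.rep_neg hd])
    (fun q hq q' hq' he => by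
      have h := mem_crossingQuads.1 hq
      have h' := mem_crossingQuads.1 hq'
      obtain ⟨ha, hb, hc, hd⟩ := h.mem
      obtain ⟨ha', hb', hc', hd'⟩ := h'.mem
      simp only [id, repQuad, Prod.mk.injEq] at he
      exact hP.eq_or_eq_neg_of_isCrossingQuad h h' ((hP.rep_eq_rep_iff ha ha').1 he.1.1)
        ((hP.rep_eq_rep_iff hb hb').1 he.1.2) ((hP.rep_eq_rep_iff hc hc').1 he.2.1)
        ((hP.rep_eq_rep_iff hd hd').1 he.2.2))
  rwa [Finset.image_id, Function.comp_id, hP.image_repQuad_crossingQuads] at this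

lemma card_image_pair_eq_two_mul_card_image_arcArcPair :
    #((crossingQuads P).image fun q => (arcCurve q.1.1 q.1.2, arcCurve q.2.1 q.2.2)) =
      2 * #((crossingQuads P).image arcArcPair) :=
  card_image_eq_two_mul_card_image_comp (crossingQuads P)
    (fun q => (arcCurve q.1.1 q.1.2, arcCurve q.2.1 q.2.2)) (fun e => s(e.1, e.2))
    (fun q => (q.2, q.1))
    (fun q hq => mem_crossingQuads.2 (mem_crossingQuads.1 hq).symm)
    (fun q hq he => by
      have h := mem_crossingQuads.1 hq
      obtain ⟨ha, hb, hc, hd⟩ := h.mem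
      obtain ⟨hab, -, -, -, -, hcd⟩ := nodup_four_iff.1 h.nodup
      exact ((hP.isCrossingQuad_iff ha hb hc hd hab hcd).1 h).1 (congrArg Prod.fst he).symm)
    (fun q _ => Sym2.eq_swap)
    (fun q _ q' _ he => by
      rcases Sym2.eq_iff.1 he with ⟨h₁, h₂⟩ | ⟨h₁, h₂⟩
      · exact Or.inl (Prod.ext h₁ h₂)
      · exact Or.inr (Prod.ext h₁ h₂))

lemma card_crossingQuads_eq_eight_mul :
    #(crossingQuads P) = 8 * #((crossingQuads P).image arcArcPair) := by
  rw [card_crossingQuads_eq_two_mul_card_image_left,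
    card_image_left_eq_two_mul_card_image_pair,
    hP.card_image_pair_eq_two_mul_card_image_arcArcPair]
  ring

end GenPosOnSphere

open Classical in
def crossingTriples (P P' : Finset E3) (v : E3 → E3) : Finset (E3 × (E3 × E3)) :=
  {q ∈ P' ×ˢ (phatFinset P ×ˢ phatFinset P) | IsCrossingTriple P q.1 (v q.1) q.2.1 q.2.2}

lemma mem_crossingTriples {q : E3 × (E3 × E3)} :
    q ∈ crossingTriples P P' v ↔ q.1 ∈ P' ∧ IsCrossingTriple P q.1 (v q.1) q.2.1 q.2.2 := by
  simp only [crossingTriples, Finset.mem_filter, Finset.mem_product, mem_phatFinset]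
  exact ⟨fun h => ⟨h.1.1, h.2⟩, fun h => ⟨⟨h.1, h.2.mem_left, h.2.mem_right⟩, h.2⟩⟩

def repTriple (P : Set E3) (q : E3 × (E3 × E3)) : E3 × (E3 × E3) :=
  (q.1, (rep P q.2.1, rep P q.2.2))

def halfArcPair (v : E3 → E3) (q : E3 × (E3 × E3)) : Sym2 Curve :=
  s(halfCircleCurve v q.1, arcCurve q.2.1 q.2.2)

namespace GenPosOnSphere

variable (hP : GenPosOnSphere (P : Set E3)) (hP' : P' ⊆ P)
  (hv : ∀ p ∈ P', IsAdmissibleDir P p (v p))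
include hP hP' hv

lemma image_repTriple_crossingTriples :
    (crossingTriples P P' v).image (repTriple P) = distinctTriples P' P := by
  ext ⟨p, B, C⟩
  simp only [Finset.mem_image, mem_crossingTriples, distinctTriples, Finset.mem_filter,
    Finset.mem_product]
  constructor
  · rintro ⟨⟨p, b, c⟩, ⟨hp, h⟩, he⟩
    simp only [repTriple, Prod.mk.injEq] at he
    obtain ⟨rfl, rfl, rfl⟩ := he
    exact ⟨⟨hp, rep_mem h.mem_left, rep_mem h.mem_right⟩, h.nodup⟩
  · rintro ⟨⟨hp, hB, hC⟩, hnd⟩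
    obtain ⟨b, c, hb, hc, h⟩ := hP.exists_isCrossingTriple (hP' hp) (hv p hp) hB hC hnd
    refine ⟨(p, b, c), ⟨hp, h⟩, ?_⟩
    simp only [repTriple, hP.rep_eq_of_eq_or_eq_neg hB hb, hP.rep_eq_of_eq_or_eq_neg hC hc]

lemma card_crossingTriples_eq_card_distinctTriples :
    #(crossingTriples P P' v) = #(distinctTriples P' P) := by
  rw [← hP.image_repTriple_crossingTriples hP' hv, Finset.card_image_of_injOn]
  rintro ⟨p, b, c⟩ hq ⟨p', b', c'⟩ hq' he
  simp only [Finset.mem_coe, mem_crossingTriples] at hq hq'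
  simp only [repTriple, Prod.mk.injEq] at he
  obtain ⟨rfl, hb, hc⟩ := he
  obtain ⟨rfl, rfl⟩ := hP.eq_of_isCrossingTriple (hP' hq.1) (hv p hq.1) hq.2 hq'.2
    ((hP.rep_eq_rep_iff hq.2.mem_left hq'.2.mem_left).1 hb.symm)
    ((hP.rep_eq_rep_iff hq.2.mem_right hq'.2.mem_right).1 hc.symm)
  rfl

end GenPosOnSphere

lemma GenPosOnSphere.card_crossingTriples_eq_two_mul_card_image
    (hP : GenPosOnSphere (P : Set E3)) (hP' : P' ⊆ P) :
    #(crossingTriples P P' v) = 2 * #((crossingTriples P P' v).image (halfArcPair v)) := by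
  have := card_image_eq_two_mul_card_image_comp (crossingTriples P P' v) id (halfArcPair v)
    (fun q => (q.1, (q.2.2, q.2.1)))
    (fun q hq => mem_crossingTriples.2 ⟨(mem_crossingTriples.1 hq).1,
      (mem_crossingTriples.1 hq).2.swap⟩)
    (fun q hq h => (nodup_three_iff.1 (mem_crossingTriples.1 hq).2.nodup).2.2
      (congrArg (rep P ·.2.2) h))
    (fun q _ => by simp only [id, halfArcPair, arcCurve_comm q.2.1])
    (fun ⟨p, b, c⟩ hq ⟨p', b', c'⟩ hq' he => by
      have h := mem_crossingTriples.1 hq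
      have h' := mem_crossingTriples.1 hq'
      dsimp only [id, halfArcPair] at he h h'
      rcases Sym2.eq_iff.1 he with ⟨hpp, hbc⟩ | ⟨hpp, -⟩
      · obtain rfl := hP.halfCircleCurve_injOn v (hP' h'.1) (hP' h.1) hpp
        rcases arcCurve_eq_arcCurve_iff.1 hbc with ⟨rfl, rfl⟩ | ⟨rfl, rfl⟩ <;> simp
      · have hbc := (nodup_three_iff.1 h.2.nodup).2.2
        exact (arcCurve_ne_halfCircleCurve (fun e => hbc (by rw [e, hP.rep_neg h.2.mem_left]))
          v p' hpp.symm).elim)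
  rwa [Finset.image_id, Function.comp_id] at this

def halfCirclePairs (P' : Set E3) (v : E3 → E3) : Set (Sym2 E3) :=
  {pr | ∃ p ∈ P', ∃ p' ∈ P', p ≠ p' ∧ (halfCircle p (v p) ∩ halfCircle p' (v p')).Nonempty ∧
    pr = s(p, p')}

namespace GenPosOnSphere

variable (hP : GenPosOnSphere (P : Set E3)) (hP' : P' ⊆ P)
  (hv : ∀ p ∈ P', IsAdmissibleDir P p (v p))
include hP hP' hv

lemma crossingPairs_subset :
    crossingPairs (drawingCurves P v P') ⊆
      (↑((crossingQuads P).image arcArcPair) ∪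
        ↑((crossingTriples P P' v).image (halfArcPair v))) ∪
      Sym2.map (halfCircleCurve v) '' halfCirclePairs P' v := by
  rintro _ ⟨c, hc, d, hd, hne, hcr, rfl⟩
  simp only [Set.mem_union, Finset.coe_image, Set.mem_image, Finset.mem_coe]
  rcases hc with ⟨a, b, ha, hb, hba, hbna, rfl⟩ | ⟨p, hp, rfl⟩ <;>
    rcases hd with ⟨c, d, hc, hd, hdc, hdnc, rfl⟩ | ⟨q, hq, rfl⟩
  · refine Or.inl (Or.inl ⟨((a, b), c, d), mem_crossingQuads.2 ?_, rfl⟩)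
    exact (hP.isCrossingQuad_iff ha hb hc hd ((hP.rep_ne_rep_iff ha hb).2 ⟨hba, hbna⟩)
      ((hP.rep_ne_rep_iff hc hd).2 ⟨hdc, hdnc⟩)).2 ⟨hne, hcr⟩
  · refine Or.inl (Or.inr ⟨(q, a, b), mem_crossingTriples.2 ⟨hq, ?_⟩, Sym2.eq_swap⟩)
    exact (hP.isCrossingTriple_iff (hP' hq) (hv q hq) ha hb
      ((hP.rep_ne_rep_iff ha hb).2 ⟨hba, hbna⟩)).2 (Crosses.symm hcr)
  · refine Or.inl (Or.inr ⟨(p, c, d), mem_crossingTriples.2 ⟨hp, ?_⟩, rfl⟩)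
    exact (hP.isCrossingTriple_iff (hP' hp) (hv p hp) hc hd
      ((hP.rep_ne_rep_iff hc hd).2 ⟨hdc, hdnc⟩)).2 hcr
  · refine Or.inr ⟨s(p, q), ⟨p, hp, q, hq, fun h => hne (h ▸ rfl), ?_, rfl⟩, rfl⟩
    exact (hP.crosses_halfCircleCurve_iff (hP' hp) (hP' hq) (fun h => hne (h ▸ rfl))
      (hv p hp) (hv q hq)).1 hcr

lemma subset_crossingPairs :
    (↑((crossingQuads P).image arcArcPair) ∪
        ↑((crossingTriples P P' v).image (halfArcPair v))) ∪
      Sym2.map (halfCircleCurve v) '' halfCirclePairs P' v ⊆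
      crossingPairs (drawingCurves P v P') := by
  simp only [Set.union_subset_iff, Finset.coe_image, Set.image_subset_iff]
  refine ⟨⟨fun ⟨⟨a, b⟩, c, d⟩ hq => ?_, fun ⟨p, b, c⟩ hq => ?_⟩, ?_⟩
  · have h := mem_crossingQuads.1 hq
    obtain ⟨ha, hb, hc, hd⟩ := h.mem
    obtain ⟨hab, -, -, -, -, hcd⟩ := nodup_four_iff.1 h.nodup
    obtain ⟨hne, hcr⟩ := (hP.isCrossingQuad_iff ha hb hc hd hab hcd).1 h
    obtain ⟨hba, hbna⟩ := (hP.rep_ne_rep_iff ha hb).1 hab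
    obtain ⟨hdc, hdnc⟩ := (hP.rep_ne_rep_iff hc hd).1 hcd
    exact ⟨arcCurve a b, Or.inl ⟨a, b, ha, hb, hba, hbna, rfl⟩,
      arcCurve c d, Or.inl ⟨c, d, hc, hd, hdc, hdnc, rfl⟩, hne, hcr, rfl⟩
  · obtain ⟨hp, h⟩ := mem_crossingTriples.1 hq
    have hbc := (nodup_three_iff.1 h.nodup).2.2
    obtain ⟨hcb, hcnb⟩ := (hP.rep_ne_rep_iff h.mem_left h.mem_right).1 hbc
    exact ⟨halfCircleCurve v p, Or.inr ⟨p, hp, rfl⟩, arcCurve b c,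
      Or.inl ⟨b, c, h.mem_left, h.mem_right, hcb, hcnb, rfl⟩,
      (arcCurve_ne_halfCircleCurve hcnb v p).symm,
      (hP.isCrossingTriple_iff (hP' hp) (hv p hp) h.mem_left h.mem_right hbc).1 h, rfl⟩
  · rintro _ ⟨p, hp, q, hq, hpq, hpq', rfl⟩
    exact ⟨halfCircleCurve v p, Or.inr ⟨p, hp, rfl⟩, halfCircleCurve v q, Or.inr ⟨q, hq, rfl⟩,
      fun h => hpq (hP.halfCircleCurve_injOn v (hP' hp) (hP' hq) h),
      (hP.crosses_halfCircleCurve_iff (hP' hp) (hP' hq) hpq (hv p hp) (hv q hq)).2 hpq', rfl⟩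

end GenPosOnSphere

namespace GenPosOnSphere

variable (hP : GenPosOnSphere (P : Set E3))
include hP

lemma arcCurve_ne_halfCircleCurve_of_isCrossingQuad {a b c d : E3}
    (h : IsCrossingQuad P a b c d) (p : E3) :
    arcCurve a b ≠ halfCircleCurve v p ∧ arcCurve c d ≠ halfCircleCurve v p := by
  obtain ⟨ha, hb, hc, hd⟩ := h.mem
  obtain ⟨hab, -, -, -, -, hcd⟩ := nodup_four_iff.1 h.nodup
  exact ⟨arcCurve_ne_halfCircleCurve ((hP.rep_ne_rep_iff ha hb).1 hab).2 v p,
    arcCurve_ne_halfCircleCurve ((hP.rep_ne_rep_iff hc hd).1 hcd).2 v p⟩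

lemma disjoint_image_arcArcPair_image_halfArcPair :
    Disjoint (↑((crossingQuads P).image arcArcPair) : Set (Sym2 Curve))
      ↑((crossingTriples P P' v).image (halfArcPair v)) := by
  simp only [Finset.coe_image, Set.disjoint_left, Set.mem_image, Finset.mem_coe, not_exists,
    not_and]
  rintro _ ⟨⟨⟨a, b⟩, c, d⟩, hq, rfl⟩ ⟨p, b', c'⟩ - he
  have := hP.arcCurve_ne_halfCircleCurve_of_isCrossingQuad (v := v) (mem_crossingQuads.1 hq) p
  rcases Sym2.eq_iff.1 he with ⟨h, -⟩ | ⟨h, -⟩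
  · exact this.1 h.symm
  · exact this.2 h.symm

lemma disjoint_union_image_halfCirclePairs :
    Disjoint (↑((crossingQuads P).image arcArcPair) ∪
        ↑((crossingTriples P P' v).image (halfArcPair v)) : Set (Sym2 Curve))
      (Sym2.map (halfCircleCurve v) '' halfCirclePairs P' v) := by
  rw [Set.disjoint_union_left, Set.disjoint_left, Set.disjoint_left]
  refine ⟨fun _ hx ⟨_, ⟨p, _, q, _, _, _, hpq⟩, he⟩ => ?_,
    fun _ hx ⟨_, ⟨p, _, q, _, _, _, hpq⟩, he⟩ => ?_⟩ <;>
    subst hpq <;> rw [Sym2.map_mk] at he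
  · obtain ⟨⟨⟨a, b⟩, c, d⟩, hq, rfl⟩ := Finset.mem_image.1 (Finset.mem_coe.1 hx)
    have h := mem_crossingQuads.1 hq
    rcases Sym2.eq_iff.1 he with ⟨hpa, -⟩ | ⟨-, hqa⟩
    · exact (hP.arcCurve_ne_halfCircleCurve_of_isCrossingQuad h p).1 hpa.symm
    · exact (hP.arcCurve_ne_halfCircleCurve_of_isCrossingQuad h q).1 hqa.symm
  · obtain ⟨⟨p', b, c⟩, hq, rfl⟩ := Finset.mem_image.1 (Finset.mem_coe.1 hx)
    have h := (mem_crossingTriples.1 hq).2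
    have hcb := ((hP.rep_ne_rep_iff h.mem_left h.mem_right).1
      (nodup_three_iff.1 h.nodup).2.2).2
    rcases Sym2.eq_iff.1 he with ⟨-, h⟩ | ⟨h, -⟩
    · exact arcCurve_ne_halfCircleCurve hcb v q h.symm
    · exact arcCurve_ne_halfCircleCurve hcb v p h.symm

lemma ncard_image_halfCirclePairs (hP' : P' ⊆ P) :
    (Sym2.map (halfCircleCurve v) '' halfCirclePairs P' v).ncard =
      (halfCirclePairs P' v).ncard := by
  refine Set.InjOn.ncard_image ?_
  rintro _ ⟨p, hp, q, hq, -, -, rfl⟩ _ ⟨p', hp', q', hq', -, -, rfl⟩ he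
  have inj := hP.halfCircleCurve_injOn v
  simp only [Sym2.map_mk, Sym2.eq_iff] at he ⊢
  rcases he with ⟨h₁, h₂⟩ | ⟨h₁, h₂⟩
  · exact Or.inl ⟨inj (hP' hp) (hP' hp') h₁, inj (hP' hq) (hP' hq') h₂⟩
  · exact Or.inr ⟨inj (hP' hp) (hP' hq') h₁, inj (hP' hq) (hP' hp') h₂⟩

end GenPosOnSphere

lemma halfCirclePairs_subset_sym2 (P' : Finset E3) (v : E3 → E3) :
    halfCirclePairs P' v ⊆ P'.sym2 := by
  rintro _ ⟨p, hp, q, hq, -, -, rfl⟩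
  exact Finset.mk_mem_sym2_iff.2 ⟨hp, hq⟩

lemma GenPosOnSphere.ncard_crossingPairs (hP : GenPosOnSphere (P : Set E3)) (hP' : P' ⊆ P)
    (hv : ∀ p ∈ P', IsAdmissibleDir P p (v p)) :
    (crossingPairs (drawingCurves P v P')).ncard =
      #((crossingQuads P).image arcArcPair) + #((crossingTriples P P' v).image (halfArcPair v)) +
        (halfCirclePairs P' v).ncard := by
  have hfin := ((Finset.finite_toSet _).subset (halfCirclePairs_subset_sym2 P' v)).image
    (Sym2.map (halfCircleCurve v))
  rw [(hP.crossingPairs_subset hP' hv).antisymm (hP.subset_crossingPairs hP' hv),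
    Set.ncard_union_eq hP.disjoint_union_image_halfCirclePairs
      ((Finset.finite_toSet _).union (Finset.finite_toSet _)) hfin,
    Set.ncard_union_eq hP.disjoint_image_arcArcPair_image_halfArcPair, Set.ncard_coe_finset,
    Set.ncard_coe_finset, hP.ncard_image_halfCirclePairs hP']

lemma GenPosOnSphere.four_mul_ncard_crossingPairs
    (hP : GenPosOnSphere (P : Set E3)) (hP' : P' ⊆ P)
    (hv : ∀ p ∈ P', IsAdmissibleDir P p (v p)) :
    4 * (crossingPairs (drawingCurves P v P')).ncard =
      #P * (#P - 1) * ((#P - 2) * (#P - 3)) + 2 * (#P' * ((#P - 1) * (#P - 2))) +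
        4 * (halfCirclePairs P' v).ncard := by
  have hAA := hP.card_crossingQuads_eq_eight_mul
  rw [hP.card_crossingQuads_eq_two_mul_card_distinctQuads, card_distinctQuads] at hAA
  have hAH := hP.card_crossingTriples_eq_two_mul_card_image hP' (v := v)
  rw [hP.card_crossingTriples_eq_card_distinctTriples hP' hv, card_distinctTriples hP'] at hAH
  rw [hP.ncard_crossingPairs hP' hv]
  omega

end CrossingCount

lemma Hfun_two_mul (k : ℕ) : Hfun (2 * k) = k * (k - 1) ^ 2 * (k - 2) / 4 := by
  obtain _ | _ | k := k
  · simp [Hfun]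
  · simp [Hfun]
  · have h₁ : 2 * (k + 2) / 2 = k + 2 := by omega
    have h₂ : (2 * (k + 2) - 1) / 2 = k + 1 := by omega
    have h₃ : (2 * (k + 2) - 2) / 2 = k + 1 := by omega
    have h₄ : (2 * (k + 2) - 3) / 2 = k := by omega
    rw [Hfun, h₁, h₂, h₃, h₄]
    push_cast
    ring

theorem crossing_count_with_strength_general
    (k t s : ℕ) (hk : 3 ≤ k) (P P' : Set E3) (hP' : P' ⊆ P)
    (hPS : P ⊆ unitSphere) (hcard : P.ncard = k)
    (hgen : GenPos P) (ht : t = k - P'.ncard)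
    (v : E3 → E3) (hv : ∀ p ∈ P', ‖v p‖ = 1 ∧ ⟪p, v p⟫ = 0)
    (hgc : ∀ p ∈ P', ((Submodule.span ℝ {p, v p} : Set E3) ∩ unitSphere) ∩ phat P =
      ({p, -p} : Set E3))
    (hs : s = Set.ncard {pr : Sym2 E3 | ∃ p ∈ P', ∃ p' ∈ P', p ≠ p' ∧
      (halfCircle p (v p) ∩ halfCircle p' (v p')).Nonempty ∧ pr = s(p, p')}) :
    (Set.ncard (crossingPairs (drawingCurves P v P')) : ℚ) =
      Hfun (2 * k) - (t : ℚ) * ((k : ℚ) - 1) * ((k : ℚ) - 2) / 2 + (s : ℚ) := by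
  have hP := GenPosOnSphere.of_three_le_ncard hPS hgen (hcard ▸ hk)
  have hPfin : P.Finite := Set.finite_of_ncard_pos (by omega)
  obtain ⟨P, rfl⟩ := hPfin.exists_finset_coe
  obtain ⟨P', rfl⟩ := (hPfin.subset hP').exists_finset_coe
  rw [Set.ncard_coe_finset] at hcard ht
  have hcount := hP.four_mul_ncard_crossingPairs (Finset.coe_subset.1 hP')
    fun p hp => hP.isAdmissibleDir (hv p hp) (hgc p hp)
  have hm : P'.card ≤ k := hcard ▸ Finset.card_le_card (Finset.coe_subset.1 hP')
  rw [hcard, ← show s = (halfCirclePairs P' v).ncard from hs] at hcount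
  rw [Hfun_two_mul, ht, Nat.cast_sub hm]
  have hq := congrArg (Nat.cast : ℕ → ℚ) hcount
  push_cast [Nat.cast_sub (by omega : 1 ≤ k), Nat.cast_sub (by omega : 2 ≤ k),
    Nat.cast_sub (by omega : 3 ≤ k)] at hq
  linear_combination hq / 4

theorem crossing_count_with_strength
    (k t s : ℕ) (hk : 3 ≤ k) (P P' : Set E3) (hP' : P' ⊆ P)
    (hPS : P ⊆ unitSphere) (hPfin : P.Finite) (hcard : P.ncard = k)
    (hgen : GenPos P) (ht : t = k - P'.ncard)
    (v : E3 → E3) (hv : ∀ p ∈ P', ‖v p‖ = 1 ∧ ⟪p, v p⟫ = 0)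
    (hgc : ∀ p ∈ P', ((Submodule.span ℝ {p, v p} : Set E3) ∩ unitSphere) ∩ phat P =
      ({p, -p} : Set E3))
    (hs : s = Set.ncard {pr : Sym2 E3 | ∃ p ∈ P', ∃ p' ∈ P', p ≠ p' ∧
      (halfCircle p (v p) ∩ halfCircle p' (v p')).Nonempty ∧ pr = s(p, p')}) :
    (Set.ncard (crossingPairs (drawingCurves P v P')) : ℚ) =
      Hfun (2 * k) - (t : ℚ) * ((k : ℚ) - 1) * ((k : ℚ) - 2) / 2 + (s : ℚ) :=
  crossing_count_with_strength_general k t s hk P P' hP' hPS hcard hgen ht v hv hgc hs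

end
end

section
/- For every ε > 0, every integer n ≥ 1, and every half-circle C on the unit sphere S², there exist n pairwise disjoint half-circles C₁, …, Cₙ on S², each contained in the open ε-neighborhood of C. -/
open Set
open scoped RealInnerProductSpace

noncomputable section

/-!
Rotations about a fixed axis `a` by small distinct angles move a half-circle `C` only a little,
and their images of `C` are pairwise disjoint as soon as the height `⟪a, ·⟫` is injective on `C`
and `C` avoids the axis: rotations preserve height, so a common point of two images comes from a
single point of `C` that two different rotations send to the same place, hence from a point on
the axis. For `C = halfCircle p v` the oblique axis `a = p + w`, with `w` normal to `p` and `v`,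
works: the height of `cos t • p + sin t • v` is `cos t`, injective on `[0, π]`.
-/

open Real

lemma Set.disjoint_image_of_injOn_of_invariant {α β : Type*} {f : α → β} {g₁ g₂ : α → α}
    {s : Set α} (hf : InjOn f s) (h₁ : ∀ x ∈ s, f (g₁ x) = f x) (h₂ : ∀ x ∈ s, f (g₂ x) = f x)
    (hg : ∀ x ∈ s, g₁ x ≠ g₂ x) : Disjoint (g₁ '' s) (g₂ '' s) := by
  rw [Set.disjoint_left]
  rintro _ ⟨x, hx, rfl⟩ ⟨y, hy, hyx⟩
  obtain rfl : y = x := hf hy hx (by rw [← h₂ y hy, hyx, h₁ x hx])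
  exact hg y hx hyx.symm

section PlaneRotation

variable {E : Type*} [NormedAddCommGroup E] [InnerProductSpace ℝ E]

lemma exists_norm_eq_one_inner_eq_zero_inner_eq_zero [FiniteDimensional ℝ E]
    (hE : 2 < Module.finrank ℝ E) (u v : E) : ∃ w : E, ‖w‖ = 1 ∧ ⟪u, w⟫ = 0 ∧ ⟪v, w⟫ = 0 := by
  classical
  set K := Submodule.span ℝ ({u, v} : Set E)
  have hK : Module.finrank ℝ K ≤ 2 := by
    have := (finrank_span_finset_le_card (R := ℝ) ({u, v} : Finset E)).trans Finset.card_le_two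
    rwa [Set.finrank, Finset.coe_insert, Finset.coe_singleton] at this
  obtain ⟨z, hzK, hz⟩ : ∃ z ∈ Kᗮ, z ≠ 0 := by
    have := K.finrank_add_finrank_orthogonal
    obtain ⟨⟨z, hzK⟩, hz⟩ :=
      Module.finrank_pos_iff_exists_ne_zero.mp (by omega : 0 < Module.finrank ℝ Kᗮ)
    exact ⟨z, hzK, by simpa using hz⟩
  have horth (x : E) (hx : x ∈ ({u, v} : Set E)) : ⟪x, z⟫ = 0 :=
    Submodule.inner_right_of_mem_orthogonal (Submodule.subset_span hx) hzK
  refine ⟨‖z‖⁻¹ • z, norm_smul_inv_norm hz, ?_, ?_⟩ <;>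
    simp [real_inner_smul_right, horth]

/-- For orthonormal `b, c`: the rotation by `θ` of the plane `span {b, c}`, extended by the
identity on its orthogonal complement. -/
def planeRotation (b c : E) (θ : ℝ) : E →ₗ[ℝ] E where
  toFun x := x + ((cos θ - 1) * ⟪b, x⟫ - sin θ * ⟪c, x⟫) • b +
    (sin θ * ⟪b, x⟫ + (cos θ - 1) * ⟪c, x⟫) • c
  map_add' x y := by simp only [inner_add_right]; module
  map_smul' r x := by simp only [real_inner_smul_right, RingHom.id_apply]; module

variable {a b c : E}

lemma planeRotation_apply (θ : ℝ) (x : E) :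
    planeRotation b c θ x = x + ((cos θ - 1) * ⟪b, x⟫ - sin θ * ⟪c, x⟫) • b +
    (sin θ * ⟪b, x⟫ + (cos θ - 1) * ⟪c, x⟫) • c := rfl

lemma inner_planeRotation_of_inner_eq_zero (hab : ⟪a, b⟫ = 0) (hac : ⟪a, c⟫ = 0)
    (θ : ℝ) (x : E) : ⟪a, planeRotation b c θ x⟫ = ⟪a, x⟫ := by
  simp [planeRotation_apply, inner_add_right, real_inner_smul_right, hab, hac]

lemma inner_first_planeRotation (hb : ‖b‖ = 1) (hbc : ⟪b, c⟫ = 0) (θ : ℝ) (x : E) :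
    ⟪b, planeRotation b c θ x⟫ = cos θ * ⟪b, x⟫ - sin θ * ⟪c, x⟫ := by
  have hbb : ⟪b, b⟫ = 1 := by rw [real_inner_self_eq_norm_sq, hb, one_pow]
  simp only [planeRotation_apply, inner_add_right, real_inner_smul_right, hbb, hbc]
  ring

lemma inner_second_planeRotation (hc : ‖c‖ = 1) (hbc : ⟪b, c⟫ = 0) (θ : ℝ) (x : E) :
    ⟪c, planeRotation b c θ x⟫ = sin θ * ⟪b, x⟫ + cos θ * ⟪c, x⟫ := by
  have hcc : ⟪c, c⟫ = 1 := by rw [real_inner_self_eq_norm_sq, hc, one_pow]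
  simp only [planeRotation_apply, inner_add_right, real_inner_smul_right, hcc,
    real_inner_comm b c ▸ hbc]
  ring

lemma inner_planeRotation_planeRotation (hb : ‖b‖ = 1) (hc : ‖c‖ = 1) (hbc : ⟪b, c⟫ = 0)
    (θ : ℝ) (x y : E) : ⟪planeRotation b c θ x, planeRotation b c θ y⟫ = ⟪x, y⟫ := by
  have hbb : ⟪b, b⟫ = 1 := by rw [real_inner_self_eq_norm_sq, hb, one_pow]
  have hcc : ⟪c, c⟫ = 1 := by rw [real_inner_self_eq_norm_sq, hc, one_pow]
  simp only [planeRotation_apply, inner_add_left, inner_add_right, real_inner_smul_left,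
    real_inner_smul_right, hbb, hcc, hbc, real_inner_comm b c ▸ hbc, real_inner_comm b x,
    real_inner_comm c x]
  linear_combination (⟪b, x⟫ * ⟪b, y⟫ + ⟪c, x⟫ * ⟪c, y⟫) * sin_sq_add_cos_sq θ

lemma norm_planeRotation_sub_le (hb : ‖b‖ = 1) (hc : ‖c‖ = 1) (θ : ℝ) (x : E) :
    ‖planeRotation b c θ x - x‖ ≤ 4 * |θ| * ‖x‖ := by
  have hcos : |cos θ - 1| ≤ |θ| := by simpa using abs_cos_sub_cos_le θ 0
  have hsin : |sin θ| ≤ |θ| := abs_sin_le_abs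
  have hbx : |⟪b, x⟫| ≤ ‖x‖ := by simpa [hb] using abs_real_inner_le_norm b x
  have hcx : |⟪c, x⟫| ≤ ‖x‖ := by simpa [hc] using abs_real_inner_le_norm c x
  calc ‖planeRotation b c θ x - x‖
      = ‖((cos θ - 1) * ⟪b, x⟫ - sin θ * ⟪c, x⟫) • b +
          (sin θ * ⟪b, x⟫ + (cos θ - 1) * ⟪c, x⟫) • c‖ := by
        rw [planeRotation_apply, add_assoc, add_sub_cancel_left]
    _ ≤ |(cos θ - 1) * ⟪b, x⟫ - sin θ * ⟪c, x⟫| + |sin θ * ⟪b, x⟫ + (cos θ - 1) * ⟪c, x⟫| := by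
        refine (norm_add_le _ _).trans_eq ?_
        rw [norm_smul, norm_smul, hb, hc, Real.norm_eq_abs, Real.norm_eq_abs, mul_one, mul_one]
    _ ≤ (|cos θ - 1| * |⟪b, x⟫| + |sin θ| * |⟪c, x⟫|) +
          (|sin θ| * |⟪b, x⟫| + |cos θ - 1| * |⟪c, x⟫|) := by
        gcongr
        · exact (abs_sub _ _).trans_eq (by rw [abs_mul, abs_mul])
        · exact (abs_add_le _ _).trans_eq (by rw [abs_mul, abs_mul])
    _ ≤ 4 * |θ| * ‖x‖ := by
        linarith [mul_le_mul hcos hbx (abs_nonneg _) (abs_nonneg θ),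
          mul_le_mul hsin hcx (abs_nonneg _) (abs_nonneg θ),
          mul_le_mul hsin hbx (abs_nonneg _) (abs_nonneg θ),
          mul_le_mul hcos hcx (abs_nonneg _) (abs_nonneg θ)]

lemma inner_eq_zero_of_planeRotation_eq (hb : ‖b‖ = 1) (hc : ‖c‖ = 1) (hbc : ⟪b, c⟫ = 0)
    {s t : ℝ} (hst : s ≠ t) (hlt : |s - t| < 2 * π) {y : E}
    (h : planeRotation b c s y = planeRotation b c t y) : ⟪b, y⟫ = 0 ∧ ⟪c, y⟫ = 0 := by
  have hby := congrArg (⟪b, ·⟫) h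
  have hcy := congrArg (⟪c, ·⟫) h
  simp only [inner_first_planeRotation hb hbc, inner_second_planeRotation hc hbc] at hby hcy
  have hcos : cos (s - t) ≠ 1 := fun h1 =>
    hst (sub_eq_zero.mp ((cos_eq_one_iff_of_lt_of_lt (abs_lt.mp hlt).1 (abs_lt.mp hlt).2).mp h1))
  have hdist : (cos s - cos t) ^ 2 + (sin s - sin t) ^ 2 ≠ 0 := by
    have : (cos s - cos t) ^ 2 + (sin s - sin t) ^ 2 = 2 * (1 - cos (s - t)) := by
      rw [cos_sub]; linear_combination sin_sq_add_cos_sq s + sin_sq_add_cos_sq t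
    rw [this]
    exact mul_ne_zero two_ne_zero (sub_ne_zero.mpr hcos.symm)
  constructor
  · refine (mul_eq_zero.mp ?_).resolve_left hdist
    linear_combination (cos s - cos t) * hby + (sin s - sin t) * hcy
  · refine (mul_eq_zero.mp ?_).resolve_left hdist
    linear_combination (cos s - cos t) * hcy - (sin s - sin t) * hby

lemma norm_planeRotation (hb : ‖b‖ = 1) (hc : ‖c‖ = 1) (hbc : ⟪b, c⟫ = 0) (θ : ℝ) (x : E) :
    ‖planeRotation b c θ x‖ = ‖x‖ := by
  rw [norm_eq_sqrt_real_inner, inner_planeRotation_planeRotation hb hc hbc,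
    ← norm_eq_sqrt_real_inner]

lemma disjoint_planeRotation_image (hb : ‖b‖ = 1) (hc : ‖c‖ = 1) (hbc : ⟪b, c⟫ = 0)
    (hab : ⟪a, b⟫ = 0) (hac : ⟪a, c⟫ = 0) {s : Set E} (hinj : InjOn (⟪a, ·⟫) s)
    (hs : ∀ x ∈ s, ⟪b, x⟫ = 0 → ⟪c, x⟫ ≠ 0) {θ₁ θ₂ : ℝ} (hne : θ₁ ≠ θ₂)
    (hlt : |θ₁ - θ₂| < 2 * π) :
    Disjoint (planeRotation b c θ₁ '' s) (planeRotation b c θ₂ '' s) :=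
  Set.disjoint_image_of_injOn_of_invariant hinj
    (fun x _ => inner_planeRotation_of_inner_eq_zero hab hac θ₁ x)
    (fun x _ => inner_planeRotation_of_inner_eq_zero hab hac θ₂ x)
    fun x hx h => hs x hx (inner_eq_zero_of_planeRotation_eq hb hc hbc hne hlt h).1
      (inner_eq_zero_of_planeRotation_eq hb hc hbc hne hlt h).2

end PlaneRotation

section HalfCircle

lemma halfCircle_map (f : E3 →ₗ[ℝ] E3) (p v : E3) :
    halfCircle (f p) (f v) = f '' halfCircle p v := by
  ext x
  simp only [halfCircle, mem_ofPred_eq, mem_image]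
  constructor
  · rintro ⟨t, ht, rfl⟩
    exact ⟨_, ⟨t, ht, rfl⟩, by simp⟩
  · rintro ⟨_, ⟨t, ht, rfl⟩, rfl⟩
    exact ⟨t, ht, by simp⟩

variable {p v x : E3}

lemma norm_eq_one_of_mem_halfCircle (hp : ‖p‖ = 1) (hv : ‖v‖ = 1) (hpv : ⟪p, v⟫ = 0)
    (hx : x ∈ halfCircle p v) : ‖x‖ = 1 := by
  obtain ⟨t, -, rfl⟩ := hx
  have hpp : ⟪p, p⟫ = 1 := by rw [real_inner_self_eq_norm_sq, hp, one_pow]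
  have hvv : ⟪v, v⟫ = 1 := by rw [real_inner_self_eq_norm_sq, hv, one_pow]
  rw [norm_eq_sqrt_real_inner, Real.sqrt_eq_one]
  simp only [inner_add_left, inner_add_right, real_inner_smul_left, real_inner_smul_right, hpp,
    hvv, hpv, real_inner_comm p v ▸ hpv]
  linear_combination sin_sq_add_cos_sq t

lemma injOn_inner_halfCircle {a : E3} (hav : ⟪a, v⟫ = 0) (hap : ⟪a, p⟫ ≠ 0) :
    InjOn (⟪a, ·⟫) (halfCircle p v) := by
  rintro _ ⟨s, hs, rfl⟩ _ ⟨t, ht, rfl⟩ h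
  simp only [inner_add_right, real_inner_smul_right, hav, mul_zero, add_zero] at h
  rw [injOn_cos hs ht (mul_right_cancel₀ hap h)]

lemma inner_ne_zero_of_mem_halfCircle {c : E3} (hv : ‖v‖ = 1) (hpv : ⟪p, v⟫ = 0)
    (hcv : ⟪c, v⟫ = 0) (hcp : ⟪c, p⟫ ≠ 0) (hx : x ∈ halfCircle p v) (hvx : ⟪v, x⟫ = 0) :
    ⟪c, x⟫ ≠ 0 := by
  obtain ⟨t, -, rfl⟩ := hx
  have hvv : ⟪v, v⟫ = 1 := by rw [real_inner_self_eq_norm_sq, hv, one_pow]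
  simp only [inner_add_right, real_inner_smul_right, hvv, hcv, real_inner_comm p v ▸ hpv,
    mul_zero, zero_add, add_zero, mul_one] at hvx ⊢
  intro hcos
  have := sin_sq_add_cos_sq t
  rw [hvx, (mul_eq_zero.mp hcos).resolve_right hcp] at this
  norm_num at this

lemma exists_rotation_frame_halfCircle (hp : ‖p‖ = 1) (hv : ‖v‖ = 1) (hpv : ⟪p, v⟫ = 0) :
    ∃ a c : E3, ‖c‖ = 1 ∧ ⟪v, c⟫ = 0 ∧ ⟪a, v⟫ = 0 ∧ ⟪a, c⟫ = 0 ∧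
      InjOn (⟪a, ·⟫) (halfCircle p v) ∧ ∀ x ∈ halfCircle p v, ⟪v, x⟫ = 0 → ⟪c, x⟫ ≠ 0 := by
  obtain ⟨w, hw, hpw, hvw⟩ :=
    exists_norm_eq_one_inner_eq_zero_inner_eq_zero (by simp) p v
  have hpw' : p - w ≠ 0 := fun h => by
    rw [sub_eq_zero.mp h, real_inner_self_eq_norm_sq, hw] at hpw
    norm_num at hpw
  have hr : ‖p - w‖⁻¹ ≠ 0 := inv_ne_zero (norm_ne_zero_iff.mpr hpw')
  refine ⟨p + w, ‖p - w‖⁻¹ • (p - w), norm_smul_inv_norm hpw', ?_, ?_, ?_,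
    injOn_inner_halfCircle ?_ ?_, fun x hx => inner_ne_zero_of_mem_halfCircle hv hpv ?_ ?_ hx⟩ <;>
    simp [inner_add_left, inner_sub_left, inner_sub_right, real_inner_smul_left,
      real_inner_smul_right, hp, hw, hpv, hpw, hvw, real_inner_comm p v ▸ hpv,
      real_inner_comm p w ▸ hpw, real_inner_comm v w ▸ hvw, hr]

end HalfCircle

theorem halfCircles_in_neighborhood_general
    (ε : ℝ) (hε : 0 < ε) (n : ℕ) (C : Set E3)
    (hC : ∃ p v0 : E3, ‖p‖ = 1 ∧ ‖v0‖ = 1 ∧ ⟪p, v0⟫ = 0 ∧ C = halfCircle p v0) :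
    ∃ p v : Fin n → E3,
      (∀ i, ‖p i‖ = 1 ∧ ‖v i‖ = 1 ∧ ⟪p i, v i⟫ = 0) ∧
      (∀ i, halfCircle (p i) (v i) ⊆ {x | ∃ y ∈ C, ‖x - y‖ < ε}) ∧
      (∀ i j, i ≠ j → halfCircle (p i) (v i) ∩ halfCircle (p j) (v j) = ∅) := by
  obtain ⟨p, v, hp, hv, hpv, rfl⟩ := hC
  obtain ⟨a, c, hc, hvc, hav, hac, hinj, haxis⟩ := exists_rotation_frame_halfCircle hp hv hpv
  have hδ : (0 : ℝ) < min (ε / 4) 1 := by positivity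
  obtain ⟨θ, hθinj, hθ⟩ :
      ∃ θ : Fin n → ℝ, Function.Injective θ ∧ ∀ i, θ i ∈ Ioo 0 (min (ε / 4) 1) :=
    let e := Fin.valEmbedding.trans ((Ioo_infinite hδ).natEmbedding _)
    ⟨fun i => e i, Subtype.val_injective.comp e.injective, fun i => (e i).2⟩
  refine ⟨fun i => planeRotation v c (θ i) p, fun i => planeRotation v c (θ i) v,
    fun i => ⟨?_, ?_, ?_⟩, fun i => ?_, fun i j hij => ?_⟩
  · rw [norm_planeRotation hv hc hvc, hp]
  · rw [norm_planeRotation hv hc hvc, hv]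
  · rw [inner_planeRotation_planeRotation hv hc hvc, hpv]
  · rw [halfCircle_map]
    rintro _ ⟨y, hy, rfl⟩
    refine ⟨y, hy, (norm_planeRotation_sub_le hv hc (θ i) y).trans_lt ?_⟩
    rw [norm_eq_one_of_mem_halfCircle hp hv hpv hy, abs_of_pos (hθ i).1]
    linarith [(hθ i).2, min_le_left (ε / 4) 1]
  · rw [halfCircle_map, halfCircle_map, ← disjoint_iff_inter_eq_empty]
    refine disjoint_planeRotation_image hv hc hvc hav hac hinj haxis (hθinj.ne hij) ?_
    obtain ⟨hi₀, hi₁⟩ := hθ i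
    obtain ⟨hj₀, hj₁⟩ := hθ j
    rw [abs_lt]; constructor <;> linarith [min_le_right (ε / 4) 1, two_le_pi]

theorem halfCircles_in_neighborhood
    (ε : ℝ) (hε : 0 < ε) (n : ℕ) (hn : 1 ≤ n) (C : Set E3)
    (hC : ∃ p v0 : E3, ‖p‖ = 1 ∧ ‖v0‖ = 1 ∧ ⟪p, v0⟫ = 0 ∧ C = halfCircle p v0) :
    ∃ p v : Fin n → E3,
      (∀ i, ‖p i‖ = 1 ∧ ‖v i‖ = 1 ∧ ⟪p i, v i⟫ = 0) ∧
      (∀ i, halfCircle (p i) (v i) ⊆ {x | ∃ y ∈ C, ‖x - y‖ < ε}) ∧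
      (∀ i j, i ≠ j → halfCircle (p i) (v i) ∩ halfCircle (p j) (v j) = ∅) :=
  halfCircles_in_neighborhood_general ε hε n C hC

end
end

section
/- For every integer k ≥ 3 there exist a set P ⊆ S² of k points in general position and, for each p ∈ P, a half-circle H_p with endpoints p and −p, such that the half-circles H_p (p ∈ P) are pairwise disjoint and the great circle of each H_p meets P ∪ (−P) only in {p, −p}; that is, a set of k points of strength 0 exists for every k. -/
open Set
open scoped RealInnerProductSpace

noncomputable section

/-!
Place the points on a circle of latitude `x₂ = c` with `0 < |c| < 1` and let every half-circle
leave its point heading east. Three distinct points of a sphere are affinely independent, and as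
they lie in a plane missing the origin they are linearly independent. The great circle through `p`
heading east meets the latitude of `p` only in `p`, and by symmetry the antipodal latitude only
in `-p`. If the half-circles from `p ≠ q` met, the height `c cos t` of the common point would force
the same parameter `t` on both, whence `cos t (p - q) + sin t (eastward p - eastward q) = 0`; but
`eastward p - eastward q` is a rescaled quarter turn of the horizontal vector `p - q`, so
`cos t = sin t = 0`.
-/

theorem AffineIndependent.linearIndependent_of_apply_eq {k V ι : Type*} [Field k]
    [AddCommGroup V] [Module k V] {p : ι → V} (hp : AffineIndependent k p) (f : V →ₗ[k] k)
    {c : k} (hc : c ≠ 0) (hf : ∀ i, f (p i) = c) : LinearIndependent k p := by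
  rw [linearIndependent_iff']
  intro s g hg
  refine hp.eq_zero_of_sum_eq_zero ?_ hg
  have h := congrArg f hg
  simp only [map_sum, map_smul, hf, smul_eq_mul, ← Finset.sum_mul, map_zero] at h
  exact (mul_eq_zero.mp h).resolve_right hc

lemma E3.norm_sq_eq (x : E3) : ‖x‖ ^ 2 = x 0 ^ 2 + x 1 ^ 2 + x 2 ^ 2 := by
  simp [EuclideanSpace.real_norm_sq_eq, Fin.sum_univ_three]

lemma E3.norm_eq_one_iff (x : E3) : ‖x‖ = 1 ↔ x 0 ^ 2 + x 1 ^ 2 + x 2 ^ 2 = 1 := by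
  rw [← E3.norm_sq_eq, pow_eq_one_iff_of_nonneg (norm_nonneg x) two_ne_zero]

lemma E3.inner_eq (x y : E3) : ⟪x, y⟫ = x 0 * y 0 + x 1 * y 1 + x 2 * y 2 := by
  simp [PiLp.inner_apply, Fin.sum_univ_three]; ring

lemma E3.eq_iff_coords {x y : E3} : x = y ↔ x 0 = y 0 ∧ x 1 = y 1 ∧ x 2 = y 2 := by
  refine ⟨by rintro rfl; simp, fun ⟨h0, h1, h2⟩ => ?_⟩
  ext i; fin_cases i <;> assumption

def latitude (c : ℝ) : Set E3 := {x | ‖x‖ = 1 ∧ x 2 = c}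

def eastward (x : E3) : E3 := (√(x 0 ^ 2 + x 1 ^ 2))⁻¹ • !₂[-x 1, x 0, 0]

lemma inner_eastward_self (x : E3) : ⟪x, eastward x⟫ = 0 := by
  rw [eastward, inner_smul_right, E3.inner_eq]
  simp [mul_comm]

lemma norm_eastward {x : E3} (hx : x 0 ^ 2 + x 1 ^ 2 ≠ 0) : ‖eastward x‖ = 1 := by
  have hpos : 0 ≤ x 0 ^ 2 + x 1 ^ 2 := by positivity
  rw [E3.norm_eq_one_iff]
  simp only [eastward, PiLp.smul_apply, smul_eq_mul, Matrix.cons_val_zero, Matrix.cons_val_one,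
    Matrix.cons_val, mul_neg, neg_sq, mul_pow, inv_pow, Real.sq_sqrt hpos, mul_zero, zero_pow
    two_ne_zero, add_zero]
  field_simp
  ring

namespace latitude

variable {c : ℝ} {x p q : E3} {P : Set E3}

lemma sq_add_sq (hx : x ∈ latitude c) : x 0 ^ 2 + x 1 ^ 2 = 1 - c ^ 2 := by
  have := E3.norm_sq_eq x
  rw [hx.1, hx.2] at this
  linarith

lemma infinite (hc1 : c ^ 2 < 1) : (latitude c).Infinite := by
  set r := √(1 - c ^ 2)
  have hr : r ^ 2 = 1 - c ^ 2 := Real.sq_sqrt (by linarith)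
  have hr0 : r ≠ 0 := by positivity
  refine Set.infinite_of_injOn_mapsTo (f := fun t => !₂[r * Real.cos t, r * Real.sin t, c])
    (s := Icc 0 Real.pi) ?_ ?_ (Set.Icc_infinite Real.pi_pos)
  · intro s hs t ht hst
    have h0 := congrArg (· 0) hst
    simp only [Matrix.cons_val_zero, mul_eq_mul_left_iff, hr0, or_false] at h0
    exact Real.injOn_cos hs ht h0
  · intro t _
    refine ⟨?_, by simp⟩
    rw [E3.norm_eq_one_iff]
    simp only [Matrix.cons_val_zero, Matrix.cons_val_one, Matrix.cons_val]
    linear_combination r ^ 2 * Real.sin_sq_add_cos_sq t + hr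

lemma cospherical (c : ℝ) : EuclideanGeometry.Cospherical (latitude c) :=
  ⟨0, 1, fun x hx => by simpa using hx.1⟩

lemma genPos (hc : c ≠ 0) (hP : P ⊆ latitude c) : GenPos P := by
  intro a ha b hb d hd hab had hbd
  refine ((cospherical c).affineIndependent_of_mem_of_ne (hP ha) (hP hb) (hP hd) hab had
    hbd).linearIndependent_of_apply_eq (EuclideanSpace.proj (2 : Fin 3)).toLinearMap hc ?_
  intro i
  fin_cases i
  exacts [(hP ha).2, (hP hb).2, (hP hd).2]

lemma norm_eastward (hc1 : c ^ 2 < 1) (hx : x ∈ latitude c) : ‖eastward x‖ = 1 :=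
  _root_.norm_eastward (by rw [sq_add_sq hx]; linarith)

lemma eastward_eq (hx : x ∈ latitude c) :
    eastward x = (√(1 - c ^ 2))⁻¹ • !₂[-x 1, x 0, 0] := by
  rw [eastward, sq_add_sq hx]

lemma eq_of_mem_span_eastward (hc : c ≠ 0) (hp : p ∈ latitude c) (hq : q ∈ latitude c)
    (h : q ∈ Submodule.span ℝ {p, eastward p}) : q = p := by
  obtain ⟨a, b, rfl⟩ := Submodule.mem_span_pair.mp h
  obtain rfl : a = 1 := by
    have h2 := hq.2
    simp only [eastward, PiLp.add_apply, PiLp.smul_apply, hp.2, smul_eq_mul,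
      Matrix.cons_val, mul_zero, add_zero] at h2
    exact (mul_eq_right₀ hc).mp h2
  rw [one_smul] at hq ⊢
  have hinner : ⟪p + b • eastward p, p⟫ = 1 := by
    rw [inner_add_left, real_inner_smul_left, real_inner_comm p (eastward p),
      inner_eastward_self, real_inner_self_eq_norm_sq, hp.1]
    simp
  rw [← sub_eq_zero, ← norm_eq_zero, ← pow_eq_zero_iff two_ne_zero, norm_sub_sq_real, hinner,
    hp.1, hq.1]
  norm_num

lemma span_eastward_inter_phat (hc : c ≠ 0) (hP : P ⊆ latitude c) (hp : p ∈ P) :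
    ((Submodule.span ℝ {p, eastward p} : Set E3) ∩ unitSphere) ∩ phat P = {p, -p} := by
  ext x
  constructor
  · rintro ⟨⟨hspan, -⟩, hx | ⟨q, hq, rfl⟩⟩
    · exact Or.inl (eq_of_mem_span_eastward hc (hP hp) (hP hx) hspan)
    · have hq' : q ∈ Submodule.span ℝ {p, eastward p} := by
        simpa using Submodule.neg_mem _ hspan
      rw [eq_of_mem_span_eastward hc (hP hp) (hP hq) hq']
      exact Or.inr rfl
  · have hp_span : p ∈ Submodule.span ℝ {p, eastward p} := Submodule.subset_span (by simp)
    rintro (rfl | rfl)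
    · exact ⟨⟨hp_span, (hP hp).1⟩, Or.inl hp⟩
    · refine ⟨⟨Submodule.neg_mem _ hp_span, ?_⟩, Or.inr ⟨p, hp, rfl⟩⟩
      simpa [unitSphere] using (hP hp).1

lemma halfCircle_eastward_disjoint (hc : c ≠ 0) (hc1 : c ^ 2 < 1) (hp : p ∈ latitude c)
    (hq : q ∈ latitude c) (hpq : p ≠ q) :
    halfCircle p (eastward p) ∩ halfCircle q (eastward q) = ∅ := by
  rw [eq_empty_iff_forall_notMem]
  rintro x ⟨⟨s, hs, rfl⟩, t, ht, hst⟩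
  have hcos : Real.cos s = Real.cos t := by
    have h2 := congrArg (· 2) hst
    simpa [eastward, hp.2, hq.2, hc] using h2
  obtain rfl : s = t := Real.injOn_cos hs ht hcos
  set ρ := √(1 - c ^ 2)
  have hρ : ρ⁻¹ ≠ 0 := inv_ne_zero (Real.sqrt_ne_zero'.mpr (by linarith))
  have h0 := congrArg (· 0) hst
  have h1 := congrArg (· 1) hst
  simp only [eastward_eq hp, eastward_eq hq, PiLp.add_apply, PiLp.smul_apply, smul_eq_mul,
    Matrix.cons_val_zero, Matrix.cons_val_one, mul_neg] at h0 h1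
  have hd : (p 0 - q 0) ^ 2 + (p 1 - q 1) ^ 2 ≠ 0 := by
    intro h
    exact hpq (E3.eq_iff_coords.mpr ⟨by nlinarith, by nlinarith, hp.2.trans hq.2.symm⟩)
  have hcos0 : Real.cos s = 0 := by
    refine (mul_eq_zero.mp ?_).resolve_right hd
    linear_combination (p 0 - q 0) * h0 + (p 1 - q 1) * h1
  have hsin0 : Real.sin s = 0 := by
    have h : Real.sin s * ρ⁻¹ * ((p 0 - q 0) ^ 2 + (p 1 - q 1) ^ 2) = 0 := by
      linear_combination (p 0 - q 0) * h1 - (p 1 - q 1) * h0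
    simpa [hρ, hd] using h
  simpa [hcos0, hsin0] using Real.sin_sq_add_cos_sq s

end latitude

theorem exists_strength_zero_configuration_general (k : ℕ) :
    ∃ (P : Set E3) (v : E3 → E3),
      P ⊆ unitSphere ∧ P.Finite ∧ P.ncard = k ∧ GenPos P ∧
      (∀ p ∈ P, ‖v p‖ = 1 ∧ ⟪p, v p⟫ = 0) ∧
      (∀ p ∈ P, ((Submodule.span ℝ {p, v p} : Set E3) ∩ unitSphere) ∩ phat P =
        ({p, -p} : Set E3)) ∧
      (∀ p ∈ P, ∀ q ∈ P, p ≠ q → halfCircle p (v p) ∩ halfCircle q (v q) = ∅) := by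
  have hc : (1 / 2 : ℝ) ≠ 0 := by norm_num
  have hc1 : (1 / 2 : ℝ) ^ 2 < 1 := by norm_num
  obtain ⟨P, hP, hPfin, hPcard⟩ := (latitude.infinite hc1).exists_subset_ncard_eq k
  refine ⟨P, eastward, fun p hp => (hP hp).1, hPfin, hPcard, latitude.genPos hc hP,
    fun p hp => ⟨latitude.norm_eastward hc1 (hP hp), inner_eastward_self p⟩,
    fun p hp => latitude.span_eastward_inter_phat hc hP hp,
    fun p hp q hq => latitude.halfCircle_eastward_disjoint hc hc1 (hP hp) (hP hq)⟩

theorem exists_strength_zero_configuration (k : ℕ) (hk : 3 ≤ k) :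
    ∃ (P : Set E3) (v : E3 → E3),
      P ⊆ unitSphere ∧ P.Finite ∧ P.ncard = k ∧ GenPos P ∧
      (∀ p ∈ P, ‖v p‖ = 1 ∧ ⟪p, v p⟫ = 0) ∧
      (∀ p ∈ P, ((Submodule.span ℝ {p, v p} : Set E3) ∩ unitSphere) ∩ phat P =
        ({p, -p} : Set E3)) ∧
      (∀ p ∈ P, ∀ q ∈ P, p ≠ q → halfCircle p (v p) ∩ halfCircle q (v q) = ∅) :=
  exists_strength_zero_configuration_general k

end
end
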